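/- arXiv:2006.16395 — 5 statements merged into one kernel-verified Lean document; each statement's English description precedes it below -/
import Mathlib

section
/- Let a two-player zero-sum POSG with finite horizon H be given, let 0 ≤ τ ≤ H−1 and let o_τ be an occupancy state. Then the maximin and minimax values of the local game Q*_τ(o_τ, ·, ·) over behavioral decision rule profiles at time τ coincide and both equal the optimal value of the subgame at o_τ: sup_{β¹_τ} inf_{β²_τ} Q*_τ(o_τ, β¹_τ, β²_τ) = inf_{β²_τ} sup_{β¹_τ} Q*_τ(o_τ, β¹_τ, β²_τ) = V*_τ(o_τ). -/
/-! The value `V_τ(o, β¹, β²)` of a pair of behavioral strategies is bilinear in their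
sequence-form realization plans, which range over compact convex polytopes, and by Kuhn's
construction every realization plan comes from a behavioral strategy. Sion's minimax theorem
therefore yields a saddle point `(β¹*, β²*)` of the subgame at `o`, whose value is `V*_τ(o)`.
Splitting off the first step, `V_τ(o, β) = r(o, β_τ) + γ V_{τ+1}(T(o, β_τ), β)`, gives
`Q*_τ(o, d¹, β²*_τ) ≤ V*_τ(o) ≤ Q*_τ(o, β¹*_τ, d²)` for all decision rules `d¹`, `d²`: the first
decision rules of `β¹*`, `β²*` form a saddle point of the local game with value `V*_τ(o)`. -/

open scoped BigOperators

/-- A two-player zero-sum partially observable stochastic game. -/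
structure POSG where
  S : Type
  A1 : Type
  A2 : Type
  Z1 : Type
  Z2 : Type
  [fintS : Fintype S]
  [fintA1 : Fintype A1]
  [fintA2 : Fintype A2]
  [fintZ1 : Fintype Z1]
  [fintZ2 : Fintype Z2]
  [neS : Nonempty S]
  [neA1 : Nonempty A1]
  [neA2 : Nonempty A2]
  [neZ1 : Nonempty Z1]
  [neZ2 : Nonempty Z2]
  P : S → A1 → A2 → S × Z1 × Z2 → ℝ
  P_nonneg : ∀ s a1 a2 x, 0 ≤ P s a1 a2 x
  P_sum_one : ∀ s a1 a2, ∑ x, P s a1 a2 x = 1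
  r : S → A1 → A2 → ℝ
  H : ℕ
  γ : ℝ
  γ_nonneg : 0 ≤ γ
  γ_lt_one : γ < 1

attribute [instance] POSG.fintS POSG.fintA1 POSG.fintA2 POSG.fintZ1 POSG.fintZ2
  POSG.neS POSG.neA1 POSG.neA2 POSG.neZ1 POSG.neZ2

/-- A length-`t` private history: a sequence of action-observation pairs. -/
abbrev Hist (A Z : Type) (t : ℕ) : Type := Fin t → A × Z

/-- A vector indexed by state–joint-history triples (the ambient space of occupancy states). -/
abbrev OccVec (G : POSG) (t : ℕ) : Type := G.S × Hist G.A1 G.Z1 t × Hist G.A2 G.Z2 t → ℝ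

/-- `o` is an occupancy state (a probability distribution). -/
def IsOcc (G : POSG) (t : ℕ) (o : OccVec G t) : Prop :=
  (∀ x, 0 ≤ o x) ∧ ∑ x, o x = 1

/-- A vector indexed by history–action pairs (the ambient space of behavioral decision rules). -/
abbrev DRVec (A Z : Type) (t : ℕ) : Type := Hist A Z t → A → ℝ

/-- `β` is a behavioral decision rule. -/
def IsDR {A Z : Type} [Fintype A] (t : ℕ) (β : DRVec A Z t) : Prop :=
  (∀ θ a, 0 ≤ β θ a) ∧ ∀ θ, ∑ a, β θ a = 1

/-- The occupancy-state transition `T(o, β¹, β²)`. -/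
noncomputable def Tr (G : POSG) (t : ℕ) (o : OccVec G t)
    (β1 : DRVec G.A1 G.Z1 t) (β2 : DRVec G.A2 G.Z2 t) : OccVec G (t + 1) :=
  fun x =>
    β1 (Fin.init x.2.1) (x.2.1 (Fin.last t)).1 * β2 (Fin.init x.2.2) (x.2.2 (Fin.last t)).1 *
      ∑ s, G.P s (x.2.1 (Fin.last t)).1 (x.2.2 (Fin.last t)).1
          (x.1, (x.2.1 (Fin.last t)).2, (x.2.2 (Fin.last t)).2) *
        o (s, Fin.init x.2.1, Fin.init x.2.2)

/-- The expected immediate reward `r(o, β¹, β²)`. -/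
noncomputable def Rew (G : POSG) (t : ℕ) (o : OccVec G t)
    (β1 : DRVec G.A1 G.Z1 t) (β2 : DRVec G.A2 G.Z2 t) : ℝ :=
  ∑ x : G.S × Hist G.A1 G.Z1 t × Hist G.A2 G.Z2 t, ∑ a1 : G.A1, ∑ a2 : G.A2,
    o x * β1 x.2.1 a1 * β2 x.2.2 a2 * G.r x.1 a1 a2

/-- A behavioral strategy: a decision rule for each time step. -/
abbrev Strat (A Z : Type) : Type := ∀ t : ℕ, DRVec A Z t

def IsStrat {A Z : Type} [Fintype A] (β : Strat A Z) : Prop := ∀ t, IsDR t (β t)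

/-- Value with `n` remaining steps starting at time `t`. -/
noncomputable def ValAux (G : POSG) :
    (n : ℕ) → (t : ℕ) → OccVec G t → Strat G.A1 G.Z1 → Strat G.A2 G.Z2 → ℝ
  | 0, _, _, _, _ => 0
  | n + 1, t, o, β1, β2 =>
      Rew G t o (β1 t) (β2 t) + G.γ * ValAux G n (t + 1) (Tr G t o (β1 t) (β2 t)) β1 β2

/-- The value `V_τ(o_τ, β_{τ:H−1})` (with `V_H = 0`). -/
noncomputable def Val (G : POSG) (t : ℕ) (o : OccVec G t)
    (β1 : Strat G.A1 G.Z1) (β2 : Strat G.A2 G.Z2) : ℝ :=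
  ValAux G (G.H - t) t o β1 β2

/-- The optimal (maximin) value `V*_τ(o_τ)`. -/
noncomputable def Vstar (G : POSG) (t : ℕ) (o : OccVec G t) : ℝ :=
  ⨆ β1 : {β : Strat G.A1 G.Z1 // IsStrat β},
    ⨅ β2 : {β : Strat G.A2 G.Z2 // IsStrat β}, Val G t o β1.1 β2.1

/-- The local game `Q*_τ(o_τ, β¹_τ, β²_τ)`. -/
noncomputable def Qstar (G : POSG) (t : ℕ) (o : OccVec G t)
    (β1 : DRVec G.A1 G.Z1 t) (β2 : DRVec G.A2 G.Z2 t) : ℝ :=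
  Rew G t o β1 β2 + G.γ * Vstar G (t + 1) (Tr G t o β1 β2)

open Finset

section Saddle

variable {ι κ : Type*}

lemma bddBelow_range_of_abs_le {f : ι → ℝ} {M : ℝ} (h : ∀ i, |f i| ≤ M) :
    BddBelow (Set.range f) :=
  ⟨-M, Set.forall_mem_range.2 fun i => neg_le_of_abs_le (h i)⟩

lemma bddAbove_range_of_abs_le {f : ι → ℝ} {M : ℝ} (h : ∀ i, |f i| ≤ M) :
    BddAbove (Set.range f) :=
  ⟨M, Set.forall_mem_range.2 fun i => le_of_abs_le (h i)⟩

lemma abs_ciSup_le [Nonempty ι] {f : ι → ℝ} {M : ℝ} (h : ∀ i, |f i| ≤ M) :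
    |⨆ i, f i| ≤ M := by
  obtain ⟨i⟩ := ‹Nonempty ι›
  exact abs_le.2 ⟨(neg_le_of_abs_le (h i)).trans (le_ciSup (bddAbove_range_of_abs_le h) i),
    ciSup_le fun i => le_of_abs_le (h i)⟩

lemma abs_ciInf_le [Nonempty ι] {f : ι → ℝ} {M : ℝ} (h : ∀ i, |f i| ≤ M) :
    |⨅ i, f i| ≤ M := by
  obtain ⟨i⟩ := ‹Nonempty ι›
  exact abs_le.2 ⟨le_ciInf fun i => neg_le_of_abs_le (h i),
    (ciInf_le (bddBelow_range_of_abs_le h) i).trans (le_of_abs_le (h i))⟩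

lemma add_mul_ciSup_le [Nonempty ι] {f : ι → ℝ} {a b c : ℝ} (hb : 0 ≤ b)
    (h : ∀ i, a + b * f i ≤ c) : a + b * ⨆ i, f i ≤ c := by
  rw [Real.mul_iSup_of_nonneg hb, ← le_sub_iff_add_le']
  exact ciSup_le fun i => le_sub_iff_add_le'.2 (h i)

lemma le_add_mul_ciInf [Nonempty ι] {f : ι → ℝ} {a b c : ℝ} (hb : 0 ≤ b)
    (h : ∀ i, c ≤ a + b * f i) : c ≤ a + b * ⨅ i, f i := by
  rw [Real.mul_iInf_of_nonneg hb, ← sub_le_iff_le_add']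
  exact le_ciInf fun i => sub_le_iff_le_add'.2 (h i)

theorem ciSup_ciInf_eq_and_ciInf_ciSup_eq_of_saddle {f : ι → κ → ℝ} {M v : ℝ}
    (hf : ∀ x y, |f x y| ≤ M) {x₀ : ι} {y₀ : κ}
    (h₁ : ∀ x, f x y₀ ≤ v) (h₂ : ∀ y, v ≤ f x₀ y) :
    (⨆ x, ⨅ y, f x y) = v ∧ (⨅ y, ⨆ x, f x y) = v := by
  have hrow : ∀ x, ⨅ y, f x y ≤ v := fun x =>
    (ciInf_le (bddBelow_range_of_abs_le (hf x)) y₀).trans (h₁ x)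
  have hcol : ∀ y, v ≤ ⨆ x, f x y := fun y =>
    (h₂ y).trans (le_ciSup (bddAbove_range_of_abs_le fun x => hf x y) x₀)
  have : Nonempty ι := ⟨x₀⟩
  have : Nonempty κ := ⟨y₀⟩
  exact ⟨le_antisymm (ciSup_le hrow)
      (le_ciSup_of_le ⟨v, Set.forall_mem_range.2 hrow⟩ x₀ (le_ciInf h₂)),
    le_antisymm (ciInf_le_of_le ⟨v, Set.forall_mem_range.2 hcol⟩ y₀ (ciSup_le h₁))
      (le_ciInf hcol)⟩

end Saddle

theorem LinearMap.exists_saddle_of_isCompact_of_convex {E F : Type*}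
    [AddCommGroup E] [Module ℝ E] [TopologicalSpace E] [IsTopologicalAddGroup E]
    [ContinuousSMul ℝ E] [T2Space E] [FiniteDimensional ℝ E]
    [AddCommGroup F] [Module ℝ F] [TopologicalSpace F] [IsTopologicalAddGroup F]
    [ContinuousSMul ℝ F] [T2Space F] [FiniteDimensional ℝ F]
    (B : E →ₗ[ℝ] F →ₗ[ℝ] ℝ) {X : Set E} {Y : Set F}
    (hXc : IsCompact X) (hXv : Convex ℝ X) (hXn : X.Nonempty)
    (hYc : IsCompact Y) (hYv : Convex ℝ Y) (hYn : Y.Nonempty) :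
    ∃ x₀ ∈ X, ∃ y₀ ∈ Y, ∀ x ∈ X, ∀ y ∈ Y, B x y₀ ≤ B x₀ y := by
  have hB : ∀ x, Continuous (B x) := fun x => (B x).continuous_of_finiteDimensional
  have hB' : ∀ y, Continuous (B.flip y) := fun y => (B.flip y).continuous_of_finiteDimensional
  obtain ⟨y₀, hy₀, x₀, hx₀, h⟩ := Sion.exists_isSaddlePointOn (f := fun y x => B x y)
    hYn hYv hYc (fun x _ => (hB x).lowerSemicontinuous.lowerSemicontinuousOn _)
    (fun x _ => ((B x).convexOn hYv).quasiconvexOn)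
    hXv hXn hXc (fun y _ => (hB' y).upperSemicontinuous.upperSemicontinuousOn _)
    (fun y _ => ((B.flip y).concaveOn hXv).quasiconcaveOn)
  exact ⟨x₀, hx₀, y₀, hy₀, fun x hx y hy => h y hy x hx⟩

noncomputable def uniformDR (A Z : Type) [Fintype A] (t : ℕ) : DRVec A Z t :=
  fun _ _ => (Fintype.card A : ℝ)⁻¹

section Basics

variable {A Z : Type} [Fintype A]

lemma isDR_uniformDR [Nonempty A] (t : ℕ) : IsDR t (uniformDR A Z t) :=
  ⟨fun _ _ => by unfold uniformDR; positivity, fun _ => by simp [uniformDR]⟩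

instance [Nonempty A] : Nonempty {β : Strat A Z // IsStrat β} :=
  ⟨⟨fun t => uniformDR A Z t, fun t => isDR_uniformDR t⟩⟩

lemma IsDR.le_one {t : ℕ} {β : DRVec A Z t} (hβ : IsDR t β) (θ : Hist A Z t) (a : A) :
    β θ a ≤ 1 :=
  (hβ.2 θ) ▸ single_le_sum (fun a _ => hβ.1 θ a) (mem_univ a)

end Basics

/-- Reindexes the terms of `∑ x, Tr G t o β1 β2 x`. -/
def trEquiv (G : POSG) (t : ℕ) :
    (G.S × Hist G.A1 G.Z1 (t + 1) × Hist G.A2 G.Z2 (t + 1)) × G.S ≃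
      (G.S × Hist G.A1 G.Z1 t × Hist G.A2 G.Z2 t) × G.A1 × G.A2 × (G.S × G.Z1 × G.Z2) where
  toFun p := ((p.2, Fin.init p.1.2.1, Fin.init p.1.2.2), (p.1.2.1 (Fin.last t)).1,
    (p.1.2.2 (Fin.last t)).1, (p.1.1, (p.1.2.1 (Fin.last t)).2, (p.1.2.2 (Fin.last t)).2))
  invFun q := ((q.2.2.2.1, Fin.snoc q.1.2.1 (q.2.1, q.2.2.2.2.1),
    Fin.snoc q.1.2.2 (q.2.2.1, q.2.2.2.2.2)), q.1.1)
  left_inv p := by simp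
  right_inv q := by simp

lemma sum_Tr (G : POSG) (t : ℕ) (o : OccVec G t) {β1 : DRVec G.A1 G.Z1 t}
    {β2 : DRVec G.A2 G.Z2 t} (h1 : IsDR t β1) (h2 : IsDR t β2) :
    ∑ x, Tr G t o β1 β2 x = ∑ x, o x := by
  calc ∑ x, Tr G t o β1 β2 x
      = ∑ p : (G.S × Hist G.A1 G.Z1 (t + 1) × Hist G.A2 G.Z2 (t + 1)) × G.S,
          β1 (Fin.init p.1.2.1) (p.1.2.1 (Fin.last t)).1 *
            β2 (Fin.init p.1.2.2) (p.1.2.2 (Fin.last t)).1 *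
            (G.P p.2 (p.1.2.1 (Fin.last t)).1 (p.1.2.2 (Fin.last t)).1
              (p.1.1, (p.1.2.1 (Fin.last t)).2, (p.1.2.2 (Fin.last t)).2) *
            o (p.2, Fin.init p.1.2.1, Fin.init p.1.2.2)) := by
        rw [Fintype.sum_prod_type (α₁ := G.S × _ × _)]; simp only [Tr, mul_sum]
    _ = ∑ q : (G.S × Hist G.A1 G.Z1 t × Hist G.A2 G.Z2 t) × G.A1 × G.A2 × (G.S × G.Z1 × G.Z2),
          o q.1 * (β1 q.1.2.1 q.2.1 * (β2 q.1.2.2 q.2.2.1 * G.P q.1.1 q.2.1 q.2.2.1 q.2.2.2)) :=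
        Fintype.sum_equiv (trEquiv G t) _ _ fun _ => by
          simp only [trEquiv, Equiv.coe_fn_mk]; ring
    _ = ∑ x, o x := by
        simp only [Fintype.sum_prod_type (α₁ := G.S × Hist G.A1 G.Z1 t × Hist G.A2 G.Z2 t),
          Fintype.sum_prod_type (α₁ := G.A1), Fintype.sum_prod_type (α₁ := G.A2),
          ← mul_sum, G.P_sum_one, mul_one, h1.2, h2.2]

lemma IsOcc.Tr {G : POSG} {t : ℕ} {o : OccVec G t} (ho : IsOcc G t o)
    {β1 : DRVec G.A1 G.Z1 t} {β2 : DRVec G.A2 G.Z2 t} (h1 : IsDR t β1) (h2 : IsDR t β2) :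
    IsOcc G (t + 1) (Tr G t o β1 β2) :=
  ⟨fun _ => mul_nonneg (mul_nonneg (h1.1 _ _) (h2.1 _ _))
      (sum_nonneg fun _ _ => mul_nonneg (G.P_nonneg _ _ _ _) (ho.1 _)),
    (sum_Tr G t o h1 h2).trans ho.2⟩

section Bounds

variable (G : POSG)

lemma abs_r_le (s : G.S) (a1 : G.A1) (a2 : G.A2) : |G.r s a1 a2| ≤ ‖G.r‖ :=
  ((norm_le_pi_norm (G.r s a1) a2).trans (norm_le_pi_norm (G.r s) a1)).trans
    (norm_le_pi_norm G.r s)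

lemma abs_Rew_le {t : ℕ} {o : OccVec G t} (ho : IsOcc G t o) {β1 : DRVec G.A1 G.Z1 t}
    {β2 : DRVec G.A2 G.Z2 t} (h1 : IsDR t β1) (h2 : IsDR t β2) :
    |Rew G t o β1 β2| ≤ ‖G.r‖ := by
  have hw : ∀ x a1 a2, 0 ≤ o x * β1 x.2.1 a1 * β2 x.2.2 a2 := fun x a1 a2 =>
    mul_nonneg (mul_nonneg (ho.1 x) (h1.1 _ a1)) (h2.1 _ a2)
  calc |Rew G t o β1 β2|
      ≤ ∑ x, ∑ a1, ∑ a2, o x * β1 x.2.1 a1 * β2 x.2.2 a2 * ‖G.r‖ := by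
        refine (abs_sum_le_sum_abs _ _).trans (sum_le_sum fun x _ => ?_)
        refine (abs_sum_le_sum_abs _ _).trans (sum_le_sum fun a1 _ => ?_)
        refine (abs_sum_le_sum_abs _ _).trans (sum_le_sum fun a2 _ => ?_)
        rw [abs_mul, abs_of_nonneg (hw x a1 a2)]
        exact mul_le_mul_of_nonneg_left (abs_r_le G _ _ _) (hw x a1 a2)
    _ = ‖G.r‖ := by
        simp only [← sum_mul, mul_assoc, ← mul_sum, h1.2, h2.2, ho.2, one_mul]

lemma abs_ValAux_le (n t : ℕ) (o : OccVec G t) (ho : IsOcc G t o) {β1 : Strat G.A1 G.Z1}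
    {β2 : Strat G.A2 G.Z2} (h1 : IsStrat β1) (h2 : IsStrat β2) :
    |ValAux G n t o β1 β2| ≤ n * ‖G.r‖ := by
  induction n generalizing t o with
  | zero => simp [ValAux]
  | succ n ih =>
    have hγ : |G.γ| ≤ 1 := abs_le.2 ⟨by linarith [G.γ_nonneg], G.γ_lt_one.le⟩
    calc |ValAux G (n + 1) t o β1 β2|
        ≤ |Rew G t o (β1 t) (β2 t)|
            + |G.γ| * |ValAux G n (t + 1) (Tr G t o (β1 t) (β2 t)) β1 β2| :=
          (abs_add_le _ _).trans_eq (by rw [abs_mul])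
      _ ≤ ‖G.r‖ + 1 * (n * ‖G.r‖) := by
          gcongr
          · exact abs_Rew_le G ho (h1 t) (h2 t)
          · exact ih _ _ (ho.Tr (h1 t) (h2 t))
      _ = (n + 1 : ℕ) * ‖G.r‖ := by push_cast; ring

lemma abs_Val_le {t : ℕ} {o : OccVec G t} (ho : IsOcc G t o) {β1 : Strat G.A1 G.Z1}
    {β2 : Strat G.A2 G.Z2} (h1 : IsStrat β1) (h2 : IsStrat β2) :
    |Val G t o β1 β2| ≤ (G.H - t : ℕ) * ‖G.r‖ :=
  abs_ValAux_le G _ t o ho h1 h2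

lemma abs_Vstar_le {t : ℕ} {o : OccVec G t} (ho : IsOcc G t o) :
    |Vstar G t o| ≤ (G.H - t : ℕ) * ‖G.r‖ :=
  abs_ciSup_le fun β1 => abs_ciInf_le fun β2 => abs_Val_le G ho β1.2 β2.2

lemma abs_Qstar_le {t : ℕ} {o : OccVec G t} (ho : IsOcc G t o) {β1 : DRVec G.A1 G.Z1 t}
    {β2 : DRVec G.A2 G.Z2 t} (h1 : IsDR t β1) (h2 : IsDR t β2) :
    |Qstar G t o β1 β2| ≤ ‖G.r‖ + G.γ * ((G.H - (t + 1) : ℕ) * ‖G.r‖) := by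
  refine (abs_add_le _ _).trans (add_le_add (abs_Rew_le G ho h1 h2) ?_)
  rw [abs_mul, abs_of_nonneg G.γ_nonneg]
  exact mul_le_mul_of_nonneg_left (abs_Vstar_le G (ho.Tr h1 h2)) G.γ_nonneg

end Bounds

section Bellman

variable (G : POSG)

lemma IsStrat.update {A Z : Type} [Fintype A] {β : Strat A Z} (hβ : IsStrat β) {t : ℕ}
    {d : DRVec A Z t} (hd : IsDR t d) : IsStrat (Function.update β t d) :=
  (Function.forall_update_iff β fun u δ => IsDR u δ).2 ⟨hd, fun u _ => hβ u⟩

lemma ValAux_congr (n t : ℕ) (o : OccVec G t) {β1 β1' : Strat G.A1 G.Z1}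
    {β2 β2' : Strat G.A2 G.Z2} (h1 : ∀ u, t ≤ u → β1 u = β1' u)
    (h2 : ∀ u, t ≤ u → β2 u = β2' u) :
    ValAux G n t o β1 β2 = ValAux G n t o β1' β2' := by
  induction n generalizing t o with
  | zero => rfl
  | succ n ih =>
    simp only [ValAux, h1 t le_rfl, h2 t le_rfl,
      ih (t + 1) _ (fun u hu => h1 u (by omega)) (fun u hu => h2 u (by omega))]

lemma Val_update {τ : ℕ} (hτ : τ < G.H) (o : OccVec G τ) (β1 : Strat G.A1 G.Z1)
    (β2 : Strat G.A2 G.Z2) (d1 : DRVec G.A1 G.Z1 τ) (d2 : DRVec G.A2 G.Z2 τ) :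
    Val G τ o (Function.update β1 τ d1) (Function.update β2 τ d2) =
      Rew G τ o d1 d2 + G.γ * Val G (τ + 1) (Tr G τ o d1 d2) β1 β2 := by
  rw [Val, show G.H - τ = G.H - (τ + 1) + 1 by omega, ValAux, Function.update_self,
    Function.update_self, Val]
  congr 2
  exact ValAux_congr G _ _ _ (fun u hu => Function.update_of_ne (by omega) _ _)
    (fun u hu => Function.update_of_ne (by omega) _ _)

lemma Qstar_le_of_forall_Val_le {τ : ℕ} (hτ : τ < G.H) {o : OccVec G τ} (ho : IsOcc G τ o)
    {β2 : Strat G.A2 G.Z2} (hβ2 : IsStrat β2) {v : ℝ}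
    (h : ∀ β1 : Strat G.A1 G.Z1, IsStrat β1 → Val G τ o β1 β2 ≤ v)
    {d1 : DRVec G.A1 G.Z1 τ} (hd1 : IsDR τ d1) :
    Qstar G τ o d1 (β2 τ) ≤ v := by
  have ho' := ho.Tr hd1 (hβ2 τ)
  refine add_mul_ciSup_le G.γ_nonneg fun g1 => ?_
  calc Rew G τ o d1 (β2 τ)
        + G.γ * ⨅ g2 : {β : Strat G.A2 G.Z2 // IsStrat β},
          Val G (τ + 1) (Tr G τ o d1 (β2 τ)) g1.1 g2.1
      ≤ Rew G τ o d1 (β2 τ) + G.γ * Val G (τ + 1) (Tr G τ o d1 (β2 τ)) g1.1 β2 := by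
        gcongr
        · exact G.γ_nonneg
        · exact ciInf_le (bddBelow_range_of_abs_le fun g2 : {β // IsStrat β} =>
            abs_Val_le G ho' g1.2 g2.2) ⟨β2, hβ2⟩
    _ = Val G τ o (Function.update g1.1 τ d1) β2 := by
        rw [← Val_update G hτ, Function.update_eq_self]
    _ ≤ v := h _ (g1.2.update hd1)

lemma le_Qstar_of_forall_le_Val {τ : ℕ} (hτ : τ < G.H) {o : OccVec G τ} (ho : IsOcc G τ o)
    {β1 : Strat G.A1 G.Z1} (hβ1 : IsStrat β1) {v : ℝ}
    (h : ∀ β2 : Strat G.A2 G.Z2, IsStrat β2 → v ≤ Val G τ o β1 β2)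
    {d2 : DRVec G.A2 G.Z2 τ} (hd2 : IsDR τ d2) :
    v ≤ Qstar G τ o (β1 τ) d2 := by
  have ho' := ho.Tr (hβ1 τ) hd2
  calc v ≤ Rew G τ o (β1 τ) d2
        + G.γ * ⨅ g2 : {β : Strat G.A2 G.Z2 // IsStrat β},
          Val G (τ + 1) (Tr G τ o (β1 τ) d2) β1 g2.1 :=
        le_add_mul_ciInf G.γ_nonneg fun g2 => (h _ (g2.2.update hd2)).trans_eq
          (by rw [← Val_update G hτ, Function.update_eq_self])
    _ ≤ Qstar G τ o (β1 τ) d2 := by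
        unfold Qstar Vstar
        gcongr
        · exact G.γ_nonneg
        · exact le_ciSup (bddAbove_range_of_abs_le fun g1 : {β // IsStrat β} =>
            abs_ciInf_le fun g2 : {β // IsStrat β} => abs_Val_le G ho' g1.2 g2.2) ⟨β1, hβ1⟩

end Bellman

section SequenceForm

/-- The probability that `β` plays the own actions recorded in `θ` at the times `t ≤ v < u`. -/
noncomputable def seqWeight {A Z : Type} (β : Strat A Z) (t : ℕ) : (u : ℕ) → Hist A Z u → ℝ
  | 0, _ => 1
  | u + 1, θ =>
      if t ≤ u then seqWeight β t u (Fin.init θ) * β u (Fin.init θ) (θ (Fin.last u)).1 else 1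

lemma seqWeight_self {A Z : Type} (β : Strat A Z) (t : ℕ) (θ : Hist A Z t) :
    seqWeight β t t θ = 1 := by
  cases t <;> simp [seqWeight]

lemma seqWeight_succ {A Z : Type} (β : Strat A Z) {t u : ℕ} (h : t ≤ u)
    (θ : Hist A Z (u + 1)) :
    seqWeight β t (u + 1) θ =
      seqWeight β t u (Fin.init θ) * β u (Fin.init θ) (θ (Fin.last u)).1 :=
  if_pos h

lemma seqWeight_mem_Icc {A Z : Type} [Fintype A] {β : Strat A Z} (hβ : IsStrat β) (t u : ℕ)
    (θ : Hist A Z u) :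
    seqWeight β t u θ ∈ Set.Icc (0 : ℝ) 1 := by
  induction u with
  | zero => simp [seqWeight]
  | succ u ih =>
    by_cases h : t ≤ u
    · rw [seqWeight_succ β h]
      exact ⟨mul_nonneg (ih _).1 ((hβ u).1 _ _),
        mul_le_one₀ (ih _).2 ((hβ u).1 _ _) ((hβ u).le_one _ _)⟩
    · simp [seqWeight, h]

variable (G : POSG)

/-- The occupancy state at time `u` reached from `o` at time `t` (junk `0` for `u < t`). -/
noncomputable def occAt (t : ℕ) (o : OccVec G t) (β1 : Strat G.A1 G.Z1) (β2 : Strat G.A2 G.Z2)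
    (u : ℕ) : OccVec G u :=
  if h : t ≤ u then Nat.leRec o (fun v _ p => Tr G v p (β1 v) (β2 v)) h else 0

variable {G} {t : ℕ} {o : OccVec G t} {β1 : Strat G.A1 G.Z1} {β2 : Strat G.A2 G.Z2}

lemma occAt_self : occAt G t o β1 β2 t = o := by
  simp [occAt]

lemma occAt_succ {u : ℕ} (h : t ≤ u) :
    occAt G t o β1 β2 (u + 1) = Tr G u (occAt G t o β1 β2 u) (β1 u) (β2 u) := by
  simp [occAt, h, Nat.le_succ_of_le h, Nat.leRec_succ]

lemma occAt_Tr {u : ℕ} (h : t + 1 ≤ u) :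
    occAt G (t + 1) (Tr G t o (β1 t) (β2 t)) β1 β2 u = occAt G t o β1 β2 u := by
  induction u, h using Nat.le_induction with
  | base => rw [occAt_self, occAt_succ le_rfl, occAt_self]
  | succ u hu ih => rw [occAt_succ hu, occAt_succ (by omega), ih]

/-- `occAt G t o 1 1` is the occupancy state produced by the chance moves alone. -/
lemma occAt_apply {u : ℕ} (h : t ≤ u) (x : G.S × Hist G.A1 G.Z1 u × Hist G.A2 G.Z2 u) :
    occAt G t o β1 β2 u x =
      seqWeight β1 t u x.2.1 * seqWeight β2 t u x.2.2 * occAt G t o 1 1 u x := by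
  induction u, h using Nat.le_induction with
  | base => rw [occAt_self, occAt_self, seqWeight_self, seqWeight_self, one_mul, one_mul]
  | succ u hu ih =>
    simp only [occAt_succ hu, Tr, ih, seqWeight_succ _ hu, Pi.one_apply, one_mul, mul_sum]
    exact sum_congr rfl fun s _ => by ring

lemma Rew_occAt {u : ℕ} (h : t ≤ u) :
    Rew G u (occAt G t o β1 β2 u) (β1 u) (β2 u) =
      Rew G u (occAt G t o 1 1 u) (fun θ a => seqWeight β1 t u θ * β1 u θ a)
        (fun θ a => seqWeight β2 t u θ * β2 u θ a) := by
  unfold Rew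
  exact sum_congr rfl fun x _ => sum_congr rfl fun _ _ => sum_congr rfl fun _ _ => by
    rw [occAt_apply h x]; ring

lemma ValAux_eq_sum (n t : ℕ) (o : OccVec G t) :
    ValAux G n t o β1 β2 = ∑ u ∈ Ico t (t + n),
      G.γ ^ (u - t) * Rew G u (occAt G t o β1 β2 u) (β1 u) (β2 u) := by
  induction n generalizing t o with
  | zero => simp [ValAux]
  | succ n ih =>
    rw [ValAux, ih, sum_eq_sum_Ico_succ_bot (show t < t + (n + 1) by omega), Nat.sub_self,
      pow_zero, one_mul, occAt_self, mul_sum, show t + 1 + n = t + (n + 1) by omega]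
    congr 1
    refine sum_congr rfl fun u hu => ?_
    have htu : t + 1 ≤ u := (mem_Ico.1 hu).1
    rw [occAt_Tr htu, ← mul_assoc, ← pow_succ', show u - (t + 1) + 1 = u - t by omega]

lemma Val_eq_sum :
    Val G t o β1 β2 = ∑ u ∈ Ico t G.H,
      G.γ ^ (u - t) * Rew G u (occAt G t o β1 β2 u) (β1 u) (β2 u) := by
  rw [Val, ValAux_eq_sum]
  rcases le_total t G.H with h | h
  · rw [Nat.add_sub_cancel' h]
  · simp [Nat.sub_eq_zero_of_le h, Ico_eq_empty_of_le h]

end SequenceForm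

section RealizationPlans

variable {A Z : Type} [Fintype A] (t n : ℕ)

abbrev PlanIdx (A Z : Type) (t n : ℕ) : Type := Σ u : Ico t n, Hist A Z u × A

noncomputable def realizationPlan (β : Strat A Z) : PlanIdx A Z t n → ℝ :=
  fun i => seqWeight β t i.1 i.2.1 * β i.1 i.2.1 i.2.2

def realizationPlans : Set (PlanIdx A Z t n → ℝ) :=
  {x | (∀ i, 0 ≤ x i) ∧
    (∀ (h : t < n) (θ : Hist A Z t), ∑ a, x ⟨⟨t, mem_Ico.2 ⟨le_rfl, h⟩⟩, θ, a⟩ = 1) ∧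
    ∀ (u : ℕ) (hu : t ≤ u) (h : u + 1 < n) (θ : Hist A Z (u + 1)),
      ∑ a, x ⟨⟨u + 1, mem_Ico.2 ⟨by omega, h⟩⟩, θ, a⟩ =
        x ⟨⟨u, mem_Ico.2 ⟨hu, by omega⟩⟩, Fin.init θ, (θ (Fin.last u)).1⟩}

variable {t n}

lemma realizationPlan_mem_Icc {β : Strat A Z} (hβ : IsStrat β) (i : PlanIdx A Z t n) :
    realizationPlan t n β i ∈ Set.Icc (0 : ℝ) 1 :=
  ⟨mul_nonneg (seqWeight_mem_Icc hβ _ _ _).1 ((hβ _).1 _ _),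
    mul_le_one₀ (seqWeight_mem_Icc hβ _ _ _).2 ((hβ _).1 _ _) ((hβ _).le_one _ _)⟩

lemma realizationPlan_mem {β : Strat A Z} (hβ : IsStrat β) :
    realizationPlan t n β ∈ realizationPlans (A := A) (Z := Z) t n := by
  refine ⟨fun i => (realizationPlan_mem_Icc hβ i).1, fun h θ => ?_, fun u hu h θ => ?_⟩
  · simp only [realizationPlan, seqWeight_self, one_mul, (hβ t).2 θ]
  · simp only [realizationPlan, ← mul_sum, (hβ _).2 θ, mul_one, seqWeight_succ β hu]

end RealizationPlans

section Kuhn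

variable {A Z : Type} [Fintype A] {t n : ℕ}

noncomputable def normalizeOrUniform (f : A → ℝ) : A → ℝ :=
  if ∑ a, f a = 0 then fun _ => (Fintype.card A : ℝ)⁻¹ else fun a => f a / ∑ a', f a'

lemma normalizeOrUniform_nonneg {f : A → ℝ} (hf : ∀ a, 0 ≤ f a) (a : A) :
    0 ≤ normalizeOrUniform f a := by
  unfold normalizeOrUniform
  split_ifs
  · positivity
  · exact div_nonneg (hf a) (sum_nonneg fun a' _ => hf a')

lemma sum_normalizeOrUniform [Nonempty A] (f : A → ℝ) : ∑ a, normalizeOrUniform f a = 1 := by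
  unfold normalizeOrUniform
  split_ifs with h
  · simp
  · rw [← sum_div, div_self h]

lemma sum_mul_normalizeOrUniform {f : A → ℝ} (hf : ∀ a, 0 ≤ f a) (a : A) :
    (∑ a', f a') * normalizeOrUniform f a = f a := by
  unfold normalizeOrUniform
  split_ifs with h
  · rw [h, zero_mul, ((sum_eq_zero_iff_of_nonneg fun a' _ => hf a').1 h a (mem_univ a))]
  · field_simp

/-- Kuhn's construction of a behavioral strategy from a realization plan. -/
noncomputable def stratOfPlan (t n : ℕ) (x : PlanIdx A Z t n → ℝ) : Strat A Z :=
  fun u θ a => if h : u ∈ Ico t n then normalizeOrUniform (fun a' => x ⟨⟨u, h⟩, θ, a'⟩) a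
    else uniformDR A Z u θ a

lemma isStrat_stratOfPlan [Nonempty A] {x : PlanIdx A Z t n → ℝ} (hx : ∀ i, 0 ≤ x i) :
    IsStrat (stratOfPlan t n x) := by
  intro u
  unfold stratOfPlan
  split_ifs
  · exact ⟨fun θ => normalizeOrUniform_nonneg fun a => hx _, fun θ => sum_normalizeOrUniform _⟩
  · exact isDR_uniformDR u

lemma seqWeight_stratOfPlan {x : PlanIdx A Z t n → ℝ} (hx : x ∈ realizationPlans t n) {u : ℕ}
    (htu : t ≤ u) (hun : u < n) (θ : Hist A Z u) :
    seqWeight (stratOfPlan t n x) t u θ = ∑ a, x ⟨⟨u, mem_Ico.2 ⟨htu, hun⟩⟩, θ, a⟩ := by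
  induction u, htu using Nat.le_induction with
  | base => rw [seqWeight_self, hx.2.1 hun θ]
  | succ u htu ih =>
    rw [seqWeight_succ _ htu, ih (by omega), stratOfPlan, dif_pos (mem_Ico.2 ⟨htu, by omega⟩),
      sum_mul_normalizeOrUniform fun a => hx.1 _, hx.2.2 u htu hun θ]

lemma realizationPlan_stratOfPlan {x : PlanIdx A Z t n → ℝ} (hx : x ∈ realizationPlans t n) :
    realizationPlan t n (stratOfPlan t n x) = x := by
  funext ⟨⟨u, hu⟩, θ, a⟩
  have hu' := mem_Ico.1 hu
  rw [realizationPlan, seqWeight_stratOfPlan hx hu'.1 hu'.2, stratOfPlan, dif_pos hu,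
    sum_mul_normalizeOrUniform fun a => hx.1 _]

lemma range_realizationPlan [Nonempty A] :
    Set.range (fun β : {β : Strat A Z // IsStrat β} => realizationPlan t n β.1) =
      realizationPlans t n :=
  Set.Subset.antisymm (Set.range_subset_iff.2 fun β => realizationPlan_mem β.2)
    fun _ hx => ⟨⟨_, isStrat_stratOfPlan hx.1⟩, realizationPlan_stratOfPlan hx⟩

lemma realizationPlans_nonempty [Nonempty A] :
    (realizationPlans (A := A) (Z := Z) t n).Nonempty :=
  ⟨_, realizationPlan_mem (β := fun u => uniformDR A Z u) fun u => isDR_uniformDR u⟩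

lemma convex_realizationPlans : Convex ℝ (realizationPlans (A := A) (Z := Z) t n) := by
  rintro x ⟨hx0, hx1, hx2⟩ y ⟨hy0, hy1, hy2⟩ a b ha hb hab
  refine ⟨fun i => ?_, fun h θ => ?_, fun u hu h θ => ?_⟩
  · exact add_nonneg (mul_nonneg ha (hx0 i)) (mul_nonneg hb (hy0 i))
  · simp only [Pi.add_apply, Pi.smul_apply, smul_eq_mul, sum_add_distrib, ← mul_sum, hx1 h θ,
      hy1 h θ, mul_one, hab]
  · simp only [Pi.add_apply, Pi.smul_apply, smul_eq_mul, sum_add_distrib, ← mul_sum,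
      hx2 u hu h θ, hy2 u hu h θ]

lemma isClosed_realizationPlans [Fintype Z] :
    IsClosed (realizationPlans (A := A) (Z := Z) t n) := by
  simp only [realizationPlans, Set.ofPred_and, Set.ofPred_forall]
  refine .inter (isClosed_iInter fun i => isClosed_le continuous_const (continuous_apply i))
    (.inter (isClosed_iInter fun h => isClosed_iInter fun θ => isClosed_eq ?_ continuous_const)
      (isClosed_iInter fun u => isClosed_iInter fun hu => isClosed_iInter fun h =>
        isClosed_iInter fun θ => isClosed_eq ?_ (continuous_apply _))) <;>
  exact continuous_finsetSum _ fun a _ => continuous_apply _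

lemma isCompact_realizationPlans [Nonempty A] [Fintype Z] :
    IsCompact (realizationPlans (A := A) (Z := Z) t n) := by
  refine (isCompact_univ_pi fun _ => isCompact_Icc (a := (0 : ℝ)) (b := 1)).of_isClosed_subset
    isClosed_realizationPlans fun x hx i _ => ?_
  rw [← range_realizationPlan] at hx
  obtain ⟨β, rfl⟩ := hx
  exact realizationPlan_mem_Icc β.2 i

end Kuhn

section StrategySaddle

variable (G : POSG)

noncomputable def seqPayoff (t : ℕ) (o : OccVec G t) :
    (PlanIdx G.A1 G.Z1 t G.H → ℝ) →ₗ[ℝ] (PlanIdx G.A2 G.Z2 t G.H → ℝ) →ₗ[ℝ] ℝ :=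
  LinearMap.mk₂ ℝ (fun x y => ∑ u : Ico t G.H, G.γ ^ (u - t : ℕ) *
      Rew G u (occAt G t o 1 1 u) (fun θ a => x ⟨u, θ, a⟩) (fun θ a => y ⟨u, θ, a⟩))
    (fun _ _ _ => by simp only [Rew, Pi.add_apply, mul_add, add_mul, sum_add_distrib])
    (fun _ _ _ => by
      simp only [Rew, Pi.smul_apply, smul_eq_mul, mul_sum]
      exact sum_congr rfl fun _ _ => sum_congr rfl fun _ _ => sum_congr rfl fun _ _ =>
        sum_congr rfl fun _ _ => by ring)
    (fun _ _ _ => by simp only [Rew, Pi.add_apply, mul_add, add_mul, sum_add_distrib])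
    (fun _ _ _ => by
      simp only [Rew, Pi.smul_apply, smul_eq_mul, mul_sum]
      exact sum_congr rfl fun _ _ => sum_congr rfl fun _ _ => sum_congr rfl fun _ _ =>
        sum_congr rfl fun _ _ => by ring)

lemma Val_eq_seqPayoff (t : ℕ) (o : OccVec G t) (β1 : Strat G.A1 G.Z1)
    (β2 : Strat G.A2 G.Z2) :
    Val G t o β1 β2 =
      seqPayoff G t o (realizationPlan t G.H β1) (realizationPlan t G.H β2) := by
  rw [Val_eq_sum, ← sum_coe_sort]
  exact sum_congr rfl fun u _ => by rw [Rew_occAt (mem_Ico.1 u.2).1]; rfl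

theorem exists_saddle_Val (t : ℕ) (o : OccVec G t) :
    ∃ β1 β2 : {β // IsStrat β}, ∀ δ1 δ2 : {β // IsStrat β},
      Val G t o δ1.1 β2.1 ≤ Val G t o β1.1 δ2.1 := by
  obtain ⟨x, hx, y, hy, hxy⟩ := (seqPayoff G t o).exists_saddle_of_isCompact_of_convex
    isCompact_realizationPlans convex_realizationPlans realizationPlans_nonempty
    isCompact_realizationPlans convex_realizationPlans realizationPlans_nonempty
  rw [← range_realizationPlan] at hx hy
  obtain ⟨⟨β1, rfl⟩, ⟨β2, rfl⟩⟩ := And.intro hx hy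
  refine ⟨β1, β2, fun δ1 δ2 => ?_⟩
  simp only [Val_eq_seqPayoff]
  exact hxy _ (realizationPlan_mem δ1.2) _ (realizationPlan_mem δ2.2)

end StrategySaddle

/-- the maximin and minimax values of the local game `Q*_τ(o_τ, ·, ·)`
over behavioral decision rule profiles coincide and both equal `V*_τ(o_τ)`. -/
theorem local_game_maximin_minimax (G : POSG) (τ : ℕ) (hτ : τ < G.H)
    (o : OccVec G τ) (ho : IsOcc G τ o) :
    (⨆ β1 : {β : DRVec G.A1 G.Z1 τ // IsDR τ β},
        ⨅ β2 : {β : DRVec G.A2 G.Z2 τ // IsDR τ β}, Qstar G τ o β1.1 β2.1)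
      = (⨅ β2 : {β : DRVec G.A2 G.Z2 τ // IsDR τ β},
          ⨆ β1 : {β : DRVec G.A1 G.Z1 τ // IsDR τ β}, Qstar G τ o β1.1 β2.1) ∧
    (⨆ β1 : {β : DRVec G.A1 G.Z1 τ // IsDR τ β},
        ⨅ β2 : {β : DRVec G.A2 G.Z2 τ // IsDR τ β}, Qstar G τ o β1.1 β2.1)
      = Vstar G τ o := by
  obtain ⟨β1, β2, hsaddle⟩ := exists_saddle_Val G τ o
  have hV : Vstar G τ o = Val G τ o β1.1 β2.1 :=
    (ciSup_ciInf_eq_and_ciInf_ciSup_eq_of_saddle (fun δ1 δ2 => abs_Val_le G ho δ1.2 δ2.2)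
      (fun δ1 => hsaddle δ1 β2) (hsaddle β1)).1
  have hQ := ciSup_ciInf_eq_and_ciInf_ciSup_eq_of_saddle
    (f := fun d1 d2 : {β // IsDR τ β} => Qstar G τ o d1.1 d2.1)
    (x₀ := ⟨β1.1 τ, β1.2 τ⟩) (y₀ := ⟨β2.1 τ, β2.2 τ⟩)
    (fun d1 d2 => abs_Qstar_le G ho d1.2 d2.2)
    (fun d1 => Qstar_le_of_forall_Val_le G hτ ho β2.2
      (fun δ1 hδ1 => hV ▸ hsaddle ⟨δ1, hδ1⟩ β2) d1.2)
    (fun d2 => le_Qstar_of_forall_le_Val G hτ ho β1.2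
      (fun δ2 hδ2 => hV ▸ hsaddle β1 ⟨δ2, hδ2⟩) d2.2)
  exact ⟨hQ.1.trans hQ.2.symm, hQ.1⟩
end

section
/- Let a two-player zero-sum POSG with finite horizon H be given, let 0 ≤ τ ≤ H−1, and let o_τ be an occupancy state. Then for every player i ∈ {1, 2} and every time τ' with τ ≤ τ' ≤ H−1, the value V_τ(o_τ, β_{τ:H−1}) is a linear (affine) function of the single decision rule β^i_{τ'} (viewed as a vector in ℝ^{Θ^i_{τ'} × A^i}) when all the other decision rules in the profile β_{τ:H−1} are held fixed; i.e., V_τ(o_τ, ·) is multilinear in the individual decision rules. -/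
open scoped BigOperators

section Aux

variable (G : POSG)

/-- `ValAux` only depends on decision rules at times `≥ t`. -/
lemma valAux_congr :
    ∀ (n t : ℕ) (o : OccVec G t) (β1 β1' : Strat G.A1 G.Z1) (β2 β2' : Strat G.A2 G.Z2),
      (∀ s, t ≤ s → β1 s = β1' s) → (∀ s, t ≤ s → β2 s = β2' s) →
      ValAux G n t o β1 β2 = ValAux G n t o β1' β2'
  | 0, t, o, β1, β1', β2, β2', h1, h2 => by simp [ValAux]
  | n+1, t, o, β1, β1', β2, β2', h1, h2 => by
      simp only [ValAux]
      rw [h1 t le_rfl, h2 t le_rfl,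
        valAux_congr n (t+1) _ β1 β1' β2 β2'
          (fun s hs => h1 s (Nat.le_of_succ_le hs))
          (fun s hs => h2 s (Nat.le_of_succ_le hs))]

/-- `ValAux` is linear in the occupancy argument. -/
lemma valAux_lin_o (c c' : ℝ) (β1 : Strat G.A1 G.Z1) (β2 : Strat G.A2 G.Z2) :
    ∀ (n t : ℕ) (o o' : OccVec G t),
      ValAux G n t (fun x => c * o x + c' * o' x) β1 β2
        = c * ValAux G n t o β1 β2 + c' * ValAux G n t o' β1 β2
  | 0, t, o, o' => by simp [ValAux]
  | n+1, t, o, o' => by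
      simp only [ValAux]
      have hR : Rew G t (fun x => c * o x + c' * o' x) (β1 t) (β2 t)
          = c * Rew G t o (β1 t) (β2 t) + c' * Rew G t o' (β1 t) (β2 t) := by
        simp only [Rew, Finset.mul_sum, ← Finset.sum_add_distrib]
        refine Finset.sum_congr rfl fun x _ => ?_
        refine Finset.sum_congr rfl fun a1 _ => ?_
        refine Finset.sum_congr rfl fun a2 _ => ?_
        ring
      have hT : Tr G t (fun x => c * o x + c' * o' x) (β1 t) (β2 t)
          = fun x => c * Tr G t o (β1 t) (β2 t) x + c' * Tr G t o' (β1 t) (β2 t) x := by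
        funext x
        simp only [Tr, Finset.mul_sum, ← Finset.sum_add_distrib]
        refine Finset.sum_congr rfl fun s _ => ?_
        ring
      rw [hR, hT, valAux_lin_o c c' β1 β2 n (t+1)]
      ring

/-- `ValAux` is affine in the slot `τ'` of player 1's strategy. -/
lemma valAux_update1 (τ' : ℕ) (β1 : Strat G.A1 G.Z1) (β2 : Strat G.A2 G.Z2)
    (d d' : DRVec G.A1 G.Z1 τ') (c : ℝ) :
    ∀ (n t : ℕ) (o : OccVec G t),
      ValAux G n t o (Function.update β1 τ' (c • d + (1-c) • d')) β2
        = c * ValAux G n t o (Function.update β1 τ' d) β2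
          + (1-c) * ValAux G n t o (Function.update β1 τ' d') β2
  | 0, t, o => by simp [ValAux]
  | n+1, t, o => by
      by_cases ht : t = τ'
      · subst ht
        simp only [ValAux, Function.update_self]
        have hR : Rew G t o (c • d + (1-c) • d') (β2 t)
            = c * Rew G t o d (β2 t) + (1-c) * Rew G t o d' (β2 t) := by
          simp only [Rew, Finset.mul_sum, ← Finset.sum_add_distrib, Pi.add_apply,
            Pi.smul_apply, smul_eq_mul]
          refine Finset.sum_congr rfl fun x _ => ?_
          refine Finset.sum_congr rfl fun a1 _ => ?_
          refine Finset.sum_congr rfl fun a2 _ => ?_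
          ring
        have hT : Tr G t o (c • d + (1-c) • d') (β2 t)
            = fun x => c * Tr G t o d (β2 t) x + (1-c) * Tr G t o d' (β2 t) x := by
          funext x
          simp only [Tr, Pi.add_apply, Pi.smul_apply, smul_eq_mul]
          ring
        have hc : ∀ (occ : OccVec G (t+1)) (e : DRVec G.A1 G.Z1 t),
            ValAux G n (t+1) occ (Function.update β1 t e) β2
              = ValAux G n (t+1) occ β1 β2 := fun occ e =>
          valAux_congr G n (t+1) _ _ _ _ _
            (fun s hs => Function.update_of_ne (by omega) _ _) (fun _ _ => rfl)
        rw [hR, hT, valAux_lin_o G c (1-c) (Function.update β1 t (c • d + (1-c) • d')) β2 n (t+1)]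
        simp only [hc]
        ring
      · simp only [ValAux, Function.update_of_ne ht]
        rw [valAux_update1 τ' β1 β2 d d' c n (t+1)]
        ring

/-- `ValAux` is affine in the slot `τ'` of player 2's strategy. -/
lemma valAux_update2 (τ' : ℕ) (β1 : Strat G.A1 G.Z1) (β2 : Strat G.A2 G.Z2)
    (d d' : DRVec G.A2 G.Z2 τ') (c : ℝ) :
    ∀ (n t : ℕ) (o : OccVec G t),
      ValAux G n t o β1 (Function.update β2 τ' (c • d + (1-c) • d'))
        = c * ValAux G n t o β1 (Function.update β2 τ' d)
          + (1-c) * ValAux G n t o β1 (Function.update β2 τ' d')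
  | 0, t, o => by simp [ValAux]
  | n+1, t, o => by
      by_cases ht : t = τ'
      · subst ht
        simp only [ValAux, Function.update_self]
        have hR : Rew G t o (β1 t) (c • d + (1-c) • d')
            = c * Rew G t o (β1 t) d + (1-c) * Rew G t o (β1 t) d' := by
          simp only [Rew, Finset.mul_sum, ← Finset.sum_add_distrib, Pi.add_apply,
            Pi.smul_apply, smul_eq_mul]
          refine Finset.sum_congr rfl fun x _ => ?_
          refine Finset.sum_congr rfl fun a1 _ => ?_
          refine Finset.sum_congr rfl fun a2 _ => ?_
          ring
        have hT : Tr G t o (β1 t) (c • d + (1-c) • d')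
            = fun x => c * Tr G t o (β1 t) d x + (1-c) * Tr G t o (β1 t) d' x := by
          funext x
          simp only [Tr, Pi.add_apply, Pi.smul_apply, smul_eq_mul]
          ring
        have hc : ∀ (occ : OccVec G (t+1)) (e : DRVec G.A2 G.Z2 t),
            ValAux G n (t+1) occ β1 (Function.update β2 t e)
              = ValAux G n (t+1) occ β1 β2 := fun occ e =>
          valAux_congr G n (t+1) _ _ _ _ _
            (fun _ _ => rfl) (fun s hs => Function.update_of_ne (by omega) _ _)
        rw [hR, hT, valAux_lin_o G c (1-c) β1 (Function.update β2 t (c • d + (1-c) • d')) n (t+1)]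
        simp only [hc]
        ring
      · simp only [ValAux, Function.update_of_ne ht]
        rw [valAux_update2 τ' β1 β2 d d' c n (t+1)]
        ring

end Aux


/-- `V_τ(o_τ, ·)` is an affine (linear) function of each individual decision
rule `β^i_{τ'}` (τ ≤ τ' ≤ H−1) when all the other decision rules of the profile are held
fixed, i.e. it respects affine combinations in each single decision rule slot. -/
theorem value_multilinear_in_decision_rules (G : POSG) (τ : ℕ) (hτ : τ < G.H)
    (o : OccVec G τ) (ho : IsOcc G τ o)
    (τ' : ℕ) (hττ' : τ ≤ τ') (hτ' : τ' < G.H)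
    (β1 : Strat G.A1 G.Z1) (β2 : Strat G.A2 G.Z2) :
    (∀ (d d' : DRVec G.A1 G.Z1 τ') (c : ℝ),
        Val G τ o (Function.update β1 τ' (c • d + (1 - c) • d')) β2
          = c * Val G τ o (Function.update β1 τ' d) β2
            + (1 - c) * Val G τ o (Function.update β1 τ' d') β2) ∧
    (∀ (d d' : DRVec G.A2 G.Z2 τ') (c : ℝ),
        Val G τ o β1 (Function.update β2 τ' (c • d + (1 - c) • d'))
          = c * Val G τ o β1 (Function.update β2 τ' d)
            + (1 - c) * Val G τ o β1 (Function.update β2 τ' d')) := by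
  constructor
  · intro d d' c
    exact valAux_update1 G τ' β1 β2 d d' c (G.H - τ) τ o
  · intro d d' c
    exact valAux_update2 G τ' β1 β2 d d' c (G.H - τ) τ o
end

section
/- Let a two-player zero-sum POSG with finite horizon H be given and let 0 ≤ τ ≤ H−1. Set V^max_τ = ((1−γ^{H−τ})/(1−γ)) · max_{s,a¹,a²} r(s,a¹,a²), V^min_τ = ((1−γ^{H−τ})/(1−γ)) · min_{s,a¹,a²} r(s,a¹,a²), and λ_{H−τ} = (V^max_τ − V^min_τ)/2. Then the optimal value function V*_τ is λ_{H−τ}-Lipschitz on the occupancy simplex with respect to the ℓ¹-norm: |V*_τ(o) − V*_τ(o')| ≤ λ_{H−τ} ‖o − o'‖₁ for all occupancy states o, o' at time τ. -/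
open scoped BigOperators

/-- Maximal immediate reward. -/
noncomputable def rmax (G : POSG) : ℝ :=
  Finset.univ.sup' Finset.univ_nonempty
    (fun x : G.S × G.A1 × G.A2 => G.r x.1 x.2.1 x.2.2)

/-- Minimal immediate reward. -/
noncomputable def rmin (G : POSG) : ℝ :=
  Finset.univ.inf' Finset.univ_nonempty
    (fun x : G.S × G.A1 × G.A2 => G.r x.1 x.2.1 x.2.2)

/-!
For fixed strategies the value is a linear function of the occupancy state (transition and
expected reward are linear in it) and lies between `V^min` and `V^max` on occupancy states, in
particular at the Dirac occupancy states, i.e. on the standard basis. Since `o - o'` has total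
mass zero, `V(o) - V(o')` is unchanged when the midpoint `(V^max + V^min) / 2` is subtracted from
every basis value, after which each of them is at most `λ` in absolute value. The maximin over
strategies then moves by at most the uniform distance between the two families of values.
-/

open Finset

section Maximin

variable {α β : Type*} [Nonempty α] [Nonempty β] {F F' : α → β → ℝ} {m M ε : ℝ}

theorem ciSup_ciInf_le_ciSup_ciInf_add (hF : ∀ a b, F a b ∈ Set.Icc m M)
    (hF' : ∀ a b, F' a b ∈ Set.Icc m M) (h : ∀ a b, F a b ≤ F' a b + ε) :
    ⨆ a, ⨅ b, F a b ≤ (⨆ a, ⨅ b, F' a b) + ε := by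
  have bddF : ∀ a, BddBelow (Set.range (F a)) := fun a => ⟨m, by
    rintro _ ⟨b, rfl⟩; exact (hF a b).1⟩
  have bddF' : ∀ a, BddBelow (Set.range (F' a)) := fun a => ⟨m, by
    rintro _ ⟨b, rfl⟩; exact (hF' a b).1⟩
  have bddInfF' : BddAbove (Set.range fun a => ⨅ b, F' a b) := ⟨M, by
    rintro _ ⟨a, rfl⟩
    exact (ciInf_le (bddF' a) (Classical.arbitrary β)).trans (hF' _ _).2⟩
  refine ciSup_le fun a => ?_
  calc ⨅ b, F a b ≤ ⨅ b, (F' a b + ε) := ciInf_mono (bddF a) (h a)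
    _ = (⨅ b, F' a b) + ε := (ciInf_add (bddF' a) ε).symm
    _ ≤ (⨆ a, ⨅ b, F' a b) + ε := add_le_add_left (le_ciSup bddInfF' a) ε

theorem abs_ciSup_ciInf_sub_le (hF : ∀ a b, F a b ∈ Set.Icc m M)
    (hF' : ∀ a b, F' a b ∈ Set.Icc m M) (h : ∀ a b, |F a b - F' a b| ≤ ε) :
    |(⨆ a, ⨅ b, F a b) - ⨆ a, ⨅ b, F' a b| ≤ ε := by
  have h₁ := ciSup_ciInf_le_ciSup_ciInf_add hF hF' fun a b => by
    linarith [(abs_sub_le_iff.1 (h a b)).1]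
  have h₂ := ciSup_ciInf_le_ciSup_ciInf_add hF' hF fun a b => by
    linarith [(abs_sub_le_iff.1 (h a b)).2]
  exact abs_sub_le_iff.2 ⟨by linarith, by linarith⟩

end Maximin

section LinearFunctional

variable {ι : Type*} [Fintype ι]

theorem abs_sum_mul_sub_sum_mul_le {o o' v : ι → ℝ} {m M : ℝ}
    (hsum : ∑ i, o i = ∑ i, o' i) (hv : ∀ i, v i ∈ Set.Icc m M) :
    |∑ i, o i * v i - ∑ i, o' i * v i| ≤ (M - m) / 2 * ∑ i, |o i - o' i| := by
  set c := (m + M) / 2 with hc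
  have hshift : ∑ i, o i * v i - ∑ i, o' i * v i = ∑ i, (o i - o' i) * (v i - c) := by
    simp only [mul_sub, sub_mul, sum_sub_distrib, ← sum_mul, hsum]
    ring
  have hdev : ∀ i, |v i - c| ≤ (M - m) / 2 := fun i =>
    abs_sub_le_iff.2 ⟨by rw [hc]; linarith [(hv i).2], by rw [hc]; linarith [(hv i).1]⟩
  rw [hshift, mul_sum]
  refine (abs_sum_le_sum_abs _ _).trans (sum_le_sum fun i _ => ?_)
  rw [abs_mul, mul_comm]
  exact mul_le_mul_of_nonneg_right (hdev i) (abs_nonneg _)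

theorem LinearMap.abs_sub_le_of_mem_Icc [DecidableEq ι] (f : (ι → ℝ) →ₗ[ℝ] ℝ) {o o' : ι → ℝ}
    {m M : ℝ} (hsum : ∑ i, o i = ∑ i, o' i)
    (hf : ∀ i, f (fun j => if i = j then 1 else 0) ∈ Set.Icc m M) :
    |f o - f o'| ≤ (M - m) / 2 * ∑ i, |o i - o' i| := by
  simp only [f.pi_apply_eq_sum_univ o, f.pi_apply_eq_sum_univ o', smul_eq_mul]
  exact abs_sum_mul_sub_sum_mul_le hsum hf

end LinearFunctional

namespace POSG

variable (G : POSG) {t : ℕ}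

theorem rmin_le_r (s : G.S) (a1 : G.A1) (a2 : G.A2) : rmin G ≤ G.r s a1 a2 :=
  inf'_le (fun x : G.S × G.A1 × G.A2 => G.r x.1 x.2.1 x.2.2) (mem_univ (s, a1, a2))

theorem r_le_rmax (s : G.S) (a1 : G.A1) (a2 : G.A2) : G.r s a1 a2 ≤ rmax G :=
  le_sup' (fun x : G.S × G.A1 × G.A2 => G.r x.1 x.2.1 x.2.2) (mem_univ (s, a1, a2))

theorem isLinearMap_rew (β1 : DRVec G.A1 G.Z1 t) (β2 : DRVec G.A2 G.Z2 t) :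
    IsLinearMap ℝ fun o : OccVec G t => Rew G t o β1 β2 where
  map_add o o' := by simp only [Rew, Pi.add_apply, add_mul, sum_add_distrib]
  map_smul c o := by simp only [Rew, Pi.smul_apply, smul_eq_mul, mul_sum, mul_assoc]

theorem isLinearMap_tr (β1 : DRVec G.A1 G.Z1 t) (β2 : DRVec G.A2 G.Z2 t) :
    IsLinearMap ℝ fun o : OccVec G t => Tr G t o β1 β2 where
  map_add o o' := by
    funext x
    simp only [Tr, Pi.add_apply, mul_add, sum_add_distrib]
  map_smul c o := by
    funext x
    simp only [Tr, Pi.smul_apply, smul_eq_mul, mul_sum]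
    exact sum_congr rfl fun s _ => by ring

theorem isLinearMap_valAux (β1 : Strat G.A1 G.Z1) (β2 : Strat G.A2 G.Z2) (n : ℕ) :
    ∀ t, IsLinearMap ℝ fun o : OccVec G t => ValAux G n t o β1 β2 := by
  induction n with
  | zero => exact fun t => ⟨fun _ _ => (add_zero 0).symm, fun _ _ => (smul_zero _).symm⟩
  | succ n ih =>
    intro t
    have hR := G.isLinearMap_rew (β1 t) (β2 t)
    have hT := G.isLinearMap_tr (β1 t) (β2 t)
    refine ⟨fun o o' => ?_, fun c o => ?_⟩
    · simp only [ValAux, hR.map_add, hT.map_add, (ih (t + 1)).map_add]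
      ring
    · simp only [ValAux, hR.map_smul, hT.map_smul, (ih (t + 1)).map_smul, smul_eq_mul]
      ring

theorem isOcc_single [DecidableEq (G.S × Hist G.A1 G.Z1 t × Hist G.A2 G.Z2 t)]
    (x : G.S × Hist G.A1 G.Z1 t × Hist G.A2 G.Z2 t) :
    IsOcc G t fun y => if x = y then 1 else 0 :=
  ⟨fun _ => ite_nonneg zero_le_one le_rfl, by rw [sum_ite_eq, if_pos (mem_univ x)]⟩

/-- Splits off the last action-observation pairs of the histories; the extra `G.S` coordinate is
the summation variable `s` in `Tr`. -/
def transitionIndexEquiv (t : ℕ) :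
    (G.S × Hist G.A1 G.Z1 t × Hist G.A2 G.Z2 t) × (G.A1 × G.A2) × (G.S × G.Z1 × G.Z2) ≃
      (G.S × Hist G.A1 G.Z1 (t + 1) × Hist G.A2 G.Z2 (t + 1)) × G.S where
  toFun v := ((v.2.2.1, Fin.snoc v.1.2.1 (v.2.1.1, v.2.2.2.1),
      Fin.snoc v.1.2.2 (v.2.1.2, v.2.2.2.2)), v.1.1)
  invFun w := ((w.2, Fin.init w.1.2.1, Fin.init w.1.2.2),
    ((w.1.2.1 (Fin.last t)).1, (w.1.2.2 (Fin.last t)).1),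
    (w.1.1, (w.1.2.1 (Fin.last t)).2, (w.1.2.2 (Fin.last t)).2))
  left_inv v := by simp
  right_inv w := by simp [Fin.snoc_init_self]

theorem sum_tr {o : OccVec G t} {β1 : DRVec G.A1 G.Z1 t} {β2 : DRVec G.A2 G.Z2 t}
    (h1 : IsDR t β1) (h2 : IsDR t β2) : ∑ y, Tr G t o β1 β2 y = ∑ x, o x := by
  let g : (G.S × Hist G.A1 G.Z1 (t + 1) × Hist G.A2 G.Z2 (t + 1)) × G.S → ℝ := fun w =>
    β1 (Fin.init w.1.2.1) (w.1.2.1 (Fin.last t)).1 *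
      β2 (Fin.init w.1.2.2) (w.1.2.2 (Fin.last t)).1 *
      (G.P w.2 (w.1.2.1 (Fin.last t)).1 (w.1.2.2 (Fin.last t)).1
        (w.1.1, (w.1.2.1 (Fin.last t)).2, (w.1.2.2 (Fin.last t)).2) *
       o (w.2, Fin.init w.1.2.1, Fin.init w.1.2.2))
  have hP : ∀ x (a : G.A1 × G.A2), ∑ p, β1 x.2.1 a.1 * β2 x.2.2 a.2 * (G.P x.1 a.1 a.2 p * o x)
      = β1 x.2.1 a.1 * β2 x.2.2 a.2 * o x := fun x a => by
    rw [← mul_sum, ← sum_mul, G.P_sum_one, one_mul]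
  calc ∑ y, Tr G t o β1 β2 y = ∑ w, g w := by
        simp only [Fintype.sum_prod_type (f := g), g, Tr, mul_sum]
    _ = ∑ v, g (G.transitionIndexEquiv t v) :=
        (Fintype.sum_equiv _ _ g fun _ => rfl).symm
    _ = ∑ x, ∑ a : G.A1 × G.A2, ∑ p, β1 x.2.1 a.1 * β2 x.2.2 a.2 * (G.P x.1 a.1 a.2 p * o x) := by
        simp only [g, transitionIndexEquiv, Equiv.coe_fn_mk, Fin.init_snoc, Fin.snoc_last]
        exact (Fintype.sum_prod_type _).trans (sum_congr rfl fun x _ => Fintype.sum_prod_type _)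
    _ = ∑ x, o x := by
        simp only [hP, Fintype.sum_prod_type, ← sum_mul, ← mul_sum, h1.2, h2.2,
          mul_one, one_mul]

theorem isOcc_tr {o : OccVec G t} {β1 : DRVec G.A1 G.Z1 t} {β2 : DRVec G.A2 G.Z2 t}
    (ho : IsOcc G t o) (h1 : IsDR t β1) (h2 : IsDR t β2) : IsOcc G (t + 1) (Tr G t o β1 β2) :=
  ⟨fun _ => mul_nonneg (mul_nonneg (h1.1 _ _) (h2.1 _ _))
      (sum_nonneg fun _ _ => mul_nonneg (G.P_nonneg _ _ _ _) (ho.1 _)),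
    by rw [G.sum_tr h1 h2, ho.2]⟩

theorem rew_mem_Icc {o : OccVec G t} {β1 : DRVec G.A1 G.Z1 t} {β2 : DRVec G.A2 G.Z2 t}
    (ho : IsOcc G t o) (h1 : IsDR t β1) (h2 : IsDR t β2) :
    Rew G t o β1 β2 ∈ Set.Icc (rmin G) (rmax G) := by
  have hw : ∀ (x : G.S × Hist G.A1 G.Z1 t × Hist G.A2 G.Z2 t) a1 a2,
      0 ≤ o x * β1 x.2.1 a1 * β2 x.2.2 a2 := fun x a1 a2 =>
    mul_nonneg (mul_nonneg (ho.1 x) (h1.1 _ _)) (h2.1 _ _)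
  have hconst : ∀ c : ℝ, ∑ x : G.S × Hist G.A1 G.Z1 t × Hist G.A2 G.Z2 t, ∑ a1, ∑ a2,
      o x * β1 x.2.1 a1 * β2 x.2.2 a2 * c = c := fun c => by
    simp only [← sum_mul, ← mul_sum, h1.2, h2.2, mul_one, ho.2, one_mul]
  constructor
  · calc rmin G = _ := (hconst (rmin G)).symm
      _ ≤ Rew G t o β1 β2 := sum_le_sum fun x _ => sum_le_sum fun a1 _ => sum_le_sum fun a2 _ =>
          mul_le_mul_of_nonneg_left (G.rmin_le_r x.1 a1 a2) (hw x a1 a2)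
  · calc Rew G t o β1 β2 ≤ _ := sum_le_sum fun x _ => sum_le_sum fun a1 _ => sum_le_sum fun a2 _ =>
          mul_le_mul_of_nonneg_left (G.r_le_rmax x.1 a1 a2) (hw x a1 a2)
      _ = rmax G := hconst (rmax G)

theorem geom_coeff_succ (n : ℕ) :
    (1 - G.γ ^ (n + 1)) / (1 - G.γ) = 1 + G.γ * ((1 - G.γ ^ n) / (1 - G.γ)) := by
  have : 1 - G.γ ≠ 0 := (sub_pos.2 G.γ_lt_one).ne'
  field_simp
  ring

theorem valAux_mem_Icc {β1 : Strat G.A1 G.Z1} {β2 : Strat G.A2 G.Z2} (h1 : IsStrat β1)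
    (h2 : IsStrat β2) (n : ℕ) : ∀ t (o : OccVec G t), IsOcc G t o →
    ValAux G n t o β1 β2 ∈
      Set.Icc ((1 - G.γ ^ n) / (1 - G.γ) * rmin G) ((1 - G.γ ^ n) / (1 - G.γ) * rmax G) := by
  induction n with
  | zero => intro t o _; simp [ValAux]
  | succ n ih =>
    intro t o ho
    have hR := G.rew_mem_Icc ho (h1 t) (h2 t)
    have hV := ih (t + 1) _ (G.isOcc_tr ho (h1 t) (h2 t))
    simp only [ValAux, G.geom_coeff_succ, add_mul, one_mul, mul_assoc]
    exact ⟨add_le_add hR.1 (mul_le_mul_of_nonneg_left hV.1 G.γ_nonneg),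
      add_le_add hR.2 (mul_le_mul_of_nonneg_left hV.2 G.γ_nonneg)⟩

theorem abs_valAux_sub_le {β1 : Strat G.A1 G.Z1} {β2 : Strat G.A2 G.Z2} (h1 : IsStrat β1)
    (h2 : IsStrat β2) (n : ℕ) {o o' : OccVec G t} (ho : IsOcc G t o) (ho' : IsOcc G t o') :
    |ValAux G n t o β1 β2 - ValAux G n t o' β1 β2| ≤
      ((1 - G.γ ^ n) / (1 - G.γ) * rmax G - (1 - G.γ ^ n) / (1 - G.γ) * rmin G) / 2 *
        ∑ x, |o x - o' x| := by
  classical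
  exact (IsLinearMap.mk' _ (G.isLinearMap_valAux β1 β2 n t)).abs_sub_le_of_mem_Icc
    (ho.2.trans ho'.2.symm) fun x => G.valAux_mem_Icc h1 h2 n t _ (G.isOcc_single x)

end POSG

instance (A Z : Type) [Fintype A] [Nonempty A] : Nonempty {β : Strat A Z // IsStrat β} :=
  ⟨⟨fun _ _ _ => (Fintype.card A : ℝ)⁻¹, fun _ => ⟨fun _ _ => by positivity, fun _ => by simp⟩⟩⟩

theorem optimal_value_lipschitz_general (G : POSG) (τ : ℕ)
    (o o' : OccVec G τ) (ho : IsOcc G τ o) (ho' : IsOcc G τ o') :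
    |Vstar G τ o - Vstar G τ o'| ≤
      (((1 - G.γ ^ (G.H - τ)) / (1 - G.γ) * rmax G
          - (1 - G.γ ^ (G.H - τ)) / (1 - G.γ) * rmin G) / 2) * ∑ x, |o x - o' x| :=
  abs_ciSup_ciInf_sub_le (fun β1 β2 => G.valAux_mem_Icc β1.2 β2.2 _ τ o ho)
    (fun β1 β2 => G.valAux_mem_Icc β1.2 β2.2 _ τ o' ho')
    fun β1 β2 => G.abs_valAux_sub_le β1.2 β2.2 _ ho ho'

/-- with `V^max_τ = ((1−γ^{H−τ})/(1−γ))·max r`,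
`V^min_τ = ((1−γ^{H−τ})/(1−γ))·min r` and `λ_{H−τ} = (V^max_τ − V^min_τ)/2`, the optimal
value function `V*_τ` is `λ_{H−τ}`-Lipschitz on the occupancy simplex w.r.t. the ℓ¹-norm. -/
theorem optimal_value_lipschitz (G : POSG) (τ : ℕ) (hτ : τ < G.H)
    (o o' : OccVec G τ) (ho : IsOcc G τ o) (ho' : IsOcc G τ o') :
    |Vstar G τ o - Vstar G τ o'| ≤
      (((1 - G.γ ^ (G.H - τ)) / (1 - G.γ) * rmax G
          - (1 - G.γ ^ (G.H - τ)) / (1 - G.γ) * rmin G) / 2) * ∑ x, |o x - o' x| :=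
  optimal_value_lipschitz_general G τ o o' ho ho'
end

section
/- Let a two-player zero-sum POSG with finite horizon H be given, let 0 ≤ τ ≤ H−1, let o_τ be an occupancy state, and suppose the optimal value function V*_{τ+1} is λ-Lipschitz on the occupancy simplex at time τ+1 with respect to the ℓ¹-norm. Let λ_r = (max_{s,a¹,a²} r(s,a¹,a²) − min_{s,a¹,a²} r(s,a¹,a²))/2, and for decision rules of player i define ‖β^i − β'^i‖ = max_{θ^i ∈ Θ^i_τ} Σ_{a^i ∈ A^i} |β^i(θ^i, a^i) − β'^i(θ^i, a^i)|. Then for each fixed β²_τ the map β¹_τ ↦ Q*_τ(o_τ, β¹_τ, β²_τ) is (λ_r + γλ)-Lipschitz with respect to this norm, and symmetrically for each fixed β¹_τ the map β²_τ ↦ Q*_τ(o_τ, β¹_τ, β²_τ) is (λ_r + γλ)-Lipschitz. -/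
open scoped BigOperators

/-- The norm `max_θ Σ_a |β(θ,a) − β'(θ,a)|` on decision rules. -/
noncomputable def drDist {A Z : Type} [Fintype A] [Fintype Z] [Nonempty A] [Nonempty Z]
    (t : ℕ) (β β' : DRVec A Z t) : ℝ :=
  Finset.univ.sup' Finset.univ_nonempty (fun θ : Hist A Z t => ∑ a, |β θ a - β' θ a|)


namespace POSGAux

open Finset

/-- Snoc equivalence on histories. -/
def snocEquiv (A Z : Type) (t : ℕ) : (Hist A Z t × (A × Z)) ≃ Hist A Z (t + 1) where
  toFun p := Fin.snoc p.1 p.2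
  invFun h := (Fin.init h, h (Fin.last t))
  left_inv p := by simp
  right_inv h := by simp

/-- The big reindexing equivalence for sums over the transition. -/
def bigEquiv (G : POSG) (t : ℕ) :
    (Hist G.A1 G.Z1 t × Hist G.A2 G.Z2 t × G.S × G.A1 × G.A2 × (G.S × G.Z1 × G.Z2)) ≃
      ((G.S × Hist G.A1 G.Z1 (t + 1) × Hist G.A2 G.Z2 (t + 1)) × G.S) where
  toFun q := ((q.2.2.2.2.2.1, Fin.snoc q.1 (q.2.2.2.1, q.2.2.2.2.2.2.1),
               Fin.snoc q.2.1 (q.2.2.2.2.1, q.2.2.2.2.2.2.2)), q.2.2.1)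
  invFun p := (Fin.init p.1.2.1, Fin.init p.1.2.2, p.2, (p.1.2.1 (Fin.last t)).1,
               (p.1.2.2 (Fin.last t)).1,
               (p.1.1, (p.1.2.1 (Fin.last t)).2, (p.1.2.2 (Fin.last t)).2))
  left_inv q := by simp
  right_inv p := by
    obtain ⟨⟨s', h1, h2⟩, s⟩ := p
    simp

set_option maxHeartbeats 1000000 in
lemma trSum (G : POSG) (t : ℕ) (o : OccVec G t)
    (g1 : DRVec G.A1 G.Z1 t) (g2 : DRVec G.A2 G.Z2 t) :
    ∑ x, Tr G t o g1 g2 x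
      = ∑ θ1 : Hist G.A1 G.Z1 t, ∑ θ2 : Hist G.A2 G.Z2 t, ∑ s : G.S,
          (∑ a1, g1 θ1 a1) * (∑ a2, g2 θ2 a2) * o (s, θ1, θ2) := by
  have hP : ∀ s a1 a2, ∑ y : G.S × G.Z1 × G.Z2, G.P s a1 a2 y = 1 := G.P_sum_one
  calc ∑ x, Tr G t o g1 g2 x
      = ∑ x : G.S × Hist G.A1 G.Z1 (t+1) × Hist G.A2 G.Z2 (t+1), ∑ s : G.S,
          g1 (Fin.init x.2.1) (x.2.1 (Fin.last t)).1 *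
            g2 (Fin.init x.2.2) (x.2.2 (Fin.last t)).1 *
          (G.P s (x.2.1 (Fin.last t)).1 (x.2.2 (Fin.last t)).1
            (x.1, (x.2.1 (Fin.last t)).2, (x.2.2 (Fin.last t)).2) *
            o (s, Fin.init x.2.1, Fin.init x.2.2)) := by
        refine Finset.sum_congr rfl fun x _ => ?_
        rw [Tr, Finset.mul_sum]
    _ = ∑ p : (G.S × Hist G.A1 G.Z1 (t+1) × Hist G.A2 G.Z2 (t+1)) × G.S,
          g1 (Fin.init p.1.2.1) (p.1.2.1 (Fin.last t)).1 *
            g2 (Fin.init p.1.2.2) (p.1.2.2 (Fin.last t)).1 *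
          (G.P p.2 (p.1.2.1 (Fin.last t)).1 (p.1.2.2 (Fin.last t)).1
            (p.1.1, (p.1.2.1 (Fin.last t)).2, (p.1.2.2 (Fin.last t)).2) *
            o (p.2, Fin.init p.1.2.1, Fin.init p.1.2.2)) :=
        (Fintype.sum_prod_type
          (fun p : (G.S × Hist G.A1 G.Z1 (t+1) × Hist G.A2 G.Z2 (t+1)) × G.S =>
            g1 (Fin.init p.1.2.1) (p.1.2.1 (Fin.last t)).1 *
              g2 (Fin.init p.1.2.2) (p.1.2.2 (Fin.last t)).1 *
            (G.P p.2 (p.1.2.1 (Fin.last t)).1 (p.1.2.2 (Fin.last t)).1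
              (p.1.1, (p.1.2.1 (Fin.last t)).2, (p.1.2.2 (Fin.last t)).2) *
              o (p.2, Fin.init p.1.2.1, Fin.init p.1.2.2)))).symm
    _ = ∑ q : Hist G.A1 G.Z1 t × Hist G.A2 G.Z2 t × G.S × G.A1 × G.A2 ×
            (G.S × G.Z1 × G.Z2),
          g1 q.1 q.2.2.2.1 * g2 q.2.1 q.2.2.2.2.1 *
          (G.P q.2.2.1 q.2.2.2.1 q.2.2.2.2.1 q.2.2.2.2.2 * o (q.2.2.1, q.1, q.2.1)) := by
        rw [← Equiv.sum_comp (bigEquiv G t)]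
        refine Finset.sum_congr rfl fun q _ => ?_
        obtain ⟨θ1, θ2, s, a1, a2, y⟩ := q
        simp [bigEquiv]
    _ = ∑ θ1 : Hist G.A1 G.Z1 t, ∑ θ2 : Hist G.A2 G.Z2 t, ∑ s : G.S,
          (∑ a1, g1 θ1 a1) * (∑ a2, g2 θ2 a2) * o (s, θ1, θ2) := by
        have hP' : ∀ s a1 a2, ∑ s' : G.S, ∑ z1 : G.Z1, ∑ z2 : G.Z2,
            G.P s a1 a2 (s', z1, z2) = 1 := by
          intro s a1 a2
          have := hP s a1 a2
          simp only [Fintype.sum_prod_type] at this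
          exact this
        simp only [Fintype.sum_prod_type]
        refine Finset.sum_congr rfl fun θ1 _ => Finset.sum_congr rfl fun θ2 _ =>
          Finset.sum_congr rfl fun s _ => ?_
        rw [Finset.sum_mul_sum, Finset.sum_mul]
        refine Finset.sum_congr rfl fun a1 _ => ?_
        rw [Finset.sum_mul]
        refine Finset.sum_congr rfl fun a2 _ => ?_
        calc ∑ s' : G.S, ∑ z1 : G.Z1, ∑ z2 : G.Z2,
              g1 θ1 a1 * g2 θ2 a2 * (G.P s a1 a2 (s', z1, z2) * o (s, θ1, θ2))
            = (g1 θ1 a1 * g2 θ2 a2 * o (s, θ1, θ2)) *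
                ∑ s' : G.S, ∑ z1 : G.Z1, ∑ z2 : G.Z2, G.P s a1 a2 (s', z1, z2) := by
              simp only [Finset.mul_sum]
              refine Finset.sum_congr rfl fun s' _ => Finset.sum_congr rfl fun z1 _ =>
                Finset.sum_congr rfl fun z2 _ => by ring
          _ = g1 θ1 a1 * g2 θ2 a2 * o (s, θ1, θ2) := by rw [hP']; ring

lemma sum_occ (G : POSG) (t : ℕ) (o : OccVec G t) (ho : IsOcc G t o) :
    ∑ θ1 : Hist G.A1 G.Z1 t, ∑ θ2 : Hist G.A2 G.Z2 t, ∑ s : G.S, o (s, θ1, θ2) = 1 := by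
  have := ho.2
  rw [Fintype.sum_prod_type] at this
  simp only [Fintype.sum_prod_type] at this
  calc ∑ θ1 : Hist G.A1 G.Z1 t, ∑ θ2 : Hist G.A2 G.Z2 t, ∑ s : G.S, o (s, θ1, θ2)
      = ∑ θ1 : Hist G.A1 G.Z1 t, ∑ s : G.S, ∑ θ2 : Hist G.A2 G.Z2 t, o (s, θ1, θ2) := by
        exact Finset.sum_congr rfl fun θ1 _ => Finset.sum_comm
    _ = ∑ s : G.S, ∑ θ1 : Hist G.A1 G.Z1 t, ∑ θ2 : Hist G.A2 G.Z2 t, o (s, θ1, θ2) :=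
        Finset.sum_comm
    _ = 1 := this

lemma isOcc_Tr (G : POSG) (t : ℕ) (o : OccVec G t) (ho : IsOcc G t o)
    {β1 : DRVec G.A1 G.Z1 t} {β2 : DRVec G.A2 G.Z2 t}
    (h1 : IsDR t β1) (h2 : IsDR t β2) : IsOcc G (t + 1) (Tr G t o β1 β2) := by
  constructor
  · intro x
    exact mul_nonneg (mul_nonneg (h1.1 _ _) (h2.1 _ _))
      (Finset.sum_nonneg fun s _ => mul_nonneg (G.P_nonneg _ _ _ _) (ho.1 _))
  · rw [trSum]
    simp only [h1.2, h2.2, one_mul]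
    exact sum_occ G t o ho

lemma drDist_nonneg {A Z : Type} [Fintype A] [Fintype Z] [Nonempty A] [Nonempty Z]
    (t : ℕ) (β β' : DRVec A Z t) : 0 ≤ drDist t β β' := by
  obtain ⟨θ⟩ : Nonempty (Hist A Z t) := inferInstance
  unfold drDist
  exact le_trans (Finset.sum_nonneg fun a _ => abs_nonneg _)
    (Finset.le_sup' (fun θ : Hist A Z t => ∑ a, |β θ a - β' θ a|) (Finset.mem_univ θ))

lemma sum_abs_le_drDist {A Z : Type} [Fintype A] [Fintype Z] [Nonempty A] [Nonempty Z]
    (t : ℕ) (β β' : DRVec A Z t) (θ : Hist A Z t) :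
    ∑ a, |β θ a - β' θ a| ≤ drDist t β β' := by
  unfold drDist
  exact Finset.le_sup' (fun θ : Hist A Z t => ∑ a, |β θ a - β' θ a|) (Finset.mem_univ θ)

lemma trDiff1 (G : POSG) (t : ℕ) (o : OccVec G t) (ho : IsOcc G t o)
    (β1 β1' : DRVec G.A1 G.Z1 t) {β2 : DRVec G.A2 G.Z2 t} (h2 : IsDR t β2) :
    ∑ x, |Tr G t o β1 β2 x - Tr G t o β1' β2 x| ≤ drDist t β1 β1' := by
  have key : ∀ x, |Tr G t o β1 β2 x - Tr G t o β1' β2 x|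
      = Tr G t o (fun θ a => |β1 θ a - β1' θ a|) β2 x := by
    intro x
    have hb : (0:ℝ) ≤ β2 (Fin.init x.2.2) (x.2.2 (Fin.last t)).1 := h2.1 _ _
    have hq : (0:ℝ) ≤ ∑ s, G.P s (x.2.1 (Fin.last t)).1 (x.2.2 (Fin.last t)).1
        (x.1, (x.2.1 (Fin.last t)).2, (x.2.2 (Fin.last t)).2) *
        o (s, Fin.init x.2.1, Fin.init x.2.2) :=
      Finset.sum_nonneg fun s _ => mul_nonneg (G.P_nonneg _ _ _ _) (ho.1 _)
    simp only [Tr]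
    rw [show ∀ a a' b c : ℝ, a * b * c - a' * b * c = (a - a') * b * c from
      fun a a' b c => by ring]
    rw [abs_mul, abs_mul, abs_of_nonneg hb, abs_of_nonneg hq]
  simp only [key]
  rw [trSum]
  simp only [h2.2, mul_one]
  calc ∑ θ1 : Hist G.A1 G.Z1 t, ∑ θ2 : Hist G.A2 G.Z2 t, ∑ s : G.S,
        (∑ a1, |β1 θ1 a1 - β1' θ1 a1|) * o (s, θ1, θ2)
      ≤ ∑ θ1 : Hist G.A1 G.Z1 t, ∑ θ2 : Hist G.A2 G.Z2 t, ∑ s : G.S,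
          drDist t β1 β1' * o (s, θ1, θ2) := by
        refine Finset.sum_le_sum fun θ1 _ => Finset.sum_le_sum fun θ2 _ =>
          Finset.sum_le_sum fun s _ => ?_
        exact mul_le_mul_of_nonneg_right (sum_abs_le_drDist t β1 β1' θ1) (ho.1 _)
    _ = drDist t β1 β1' := by
        simp only [← Finset.mul_sum]
        rw [sum_occ G t o ho, mul_one]

lemma trDiff2 (G : POSG) (t : ℕ) (o : OccVec G t) (ho : IsOcc G t o)
    {β1 : DRVec G.A1 G.Z1 t} (h1 : IsDR t β1) (β2 β2' : DRVec G.A2 G.Z2 t) :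
    ∑ x, |Tr G t o β1 β2 x - Tr G t o β1 β2' x| ≤ drDist t β2 β2' := by
  have key : ∀ x, |Tr G t o β1 β2 x - Tr G t o β1 β2' x|
      = Tr G t o β1 (fun θ a => |β2 θ a - β2' θ a|) x := by
    intro x
    have hb : (0:ℝ) ≤ β1 (Fin.init x.2.1) (x.2.1 (Fin.last t)).1 := h1.1 _ _
    have hq : (0:ℝ) ≤ ∑ s, G.P s (x.2.1 (Fin.last t)).1 (x.2.2 (Fin.last t)).1
        (x.1, (x.2.1 (Fin.last t)).2, (x.2.2 (Fin.last t)).2) *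
        o (s, Fin.init x.2.1, Fin.init x.2.2) :=
      Finset.sum_nonneg fun s _ => mul_nonneg (G.P_nonneg _ _ _ _) (ho.1 _)
    simp only [Tr]
    rw [show ∀ a b b' c : ℝ, a * b * c - a * b' * c = a * (b - b') * c from
      fun a b b' c => by ring]
    rw [abs_mul, abs_mul, abs_of_nonneg hb, abs_of_nonneg hq]
  simp only [key]
  rw [trSum]
  simp only [h1.2, one_mul]
  calc ∑ θ1 : Hist G.A1 G.Z1 t, ∑ θ2 : Hist G.A2 G.Z2 t, ∑ s : G.S,
        (∑ a2, |β2 θ2 a2 - β2' θ2 a2|) * o (s, θ1, θ2)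
      ≤ ∑ θ1 : Hist G.A1 G.Z1 t, ∑ θ2 : Hist G.A2 G.Z2 t, ∑ s : G.S,
          drDist t β2 β2' * o (s, θ1, θ2) := by
        refine Finset.sum_le_sum fun θ1 _ => Finset.sum_le_sum fun θ2 _ =>
          Finset.sum_le_sum fun s _ => ?_
        exact mul_le_mul_of_nonneg_right (sum_abs_le_drDist t β2 β2' θ2) (ho.1 _)
    _ = drDist t β2 β2' := by
        simp only [← Finset.mul_sum]
        rw [sum_occ G t o ho, mul_one]

lemma rewDiff1 (G : POSG) (t : ℕ) (o : OccVec G t) (ho : IsOcc G t o)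
    (β1 β1' : DRVec G.A1 G.Z1 t) (β2 : DRVec G.A2 G.Z2 t)
    (h1 : IsDR t β1) (h1' : IsDR t β1') (h2 : IsDR t β2) :
    |Rew G t o β1 β2 - Rew G t o β1' β2|
      ≤ (rmax G - rmin G) / 2 * drDist t β1 β1' := by
  set c : ℝ := (rmax G + rmin G) / 2 with hc
  have hr : ∀ s a1 a2, |G.r s a1 a2 - c| ≤ (rmax G - rmin G) / 2 := by
    intro s a1 a2
    have hax : G.r s a1 a2 ≤ rmax G := by
      unfold rmax
      exact Finset.le_sup' (fun x : G.S × G.A1 × G.A2 => G.r x.1 x.2.1 x.2.2)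
        (Finset.mem_univ (s, a1, a2))
    have hin : rmin G ≤ G.r s a1 a2 := by
      unfold rmin
      exact Finset.inf'_le (fun x : G.S × G.A1 × G.A2 => G.r x.1 x.2.1 x.2.2)
        (Finset.mem_univ (s, a1, a2))
    rw [abs_le]
    constructor <;> (rw [hc]; try constructor) <;> linarith
  have key : ∀ x : G.S × Hist G.A1 G.Z1 t × Hist G.A2 G.Z2 t,
      (∑ a1, ∑ a2, o x * β1 x.2.1 a1 * β2 x.2.2 a2 * G.r x.1 a1 a2)
        - (∑ a1, ∑ a2, o x * β1' x.2.1 a1 * β2 x.2.2 a2 * G.r x.1 a1 a2)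
      = ∑ a1, ∑ a2, o x * (β1 x.2.1 a1 - β1' x.2.1 a1) * β2 x.2.2 a2 *
          (G.r x.1 a1 a2 - c) := by
    intro x
    have inner : ∀ a1, ∑ a2, o x * (β1 x.2.1 a1 - β1' x.2.1 a1) * β2 x.2.2 a2 * c
        = o x * c * (β1 x.2.1 a1 - β1' x.2.1 a1) := by
      intro a1
      calc ∑ a2, o x * (β1 x.2.1 a1 - β1' x.2.1 a1) * β2 x.2.2 a2 * c
          = (o x * c * (β1 x.2.1 a1 - β1' x.2.1 a1)) * ∑ a2, β2 x.2.2 a2 := by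
            rw [Finset.mul_sum]
            exact Finset.sum_congr rfl fun a2 _ => by ring
        _ = o x * c * (β1 x.2.1 a1 - β1' x.2.1 a1) := by rw [h2.2, mul_one]
    have hzero : ∑ a1, ∑ a2, o x * (β1 x.2.1 a1 - β1' x.2.1 a1) * β2 x.2.2 a2 * c
        = 0 := by
      simp only [inner]
      rw [← Finset.mul_sum, Finset.sum_sub_distrib, h1.2, h1'.2, sub_self, mul_zero]
    have expand : (∑ a1, ∑ a2, o x * β1 x.2.1 a1 * β2 x.2.2 a2 * G.r x.1 a1 a2)
        - (∑ a1, ∑ a2, o x * β1' x.2.1 a1 * β2 x.2.2 a2 * G.r x.1 a1 a2)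
        - (∑ a1, ∑ a2, o x * (β1 x.2.1 a1 - β1' x.2.1 a1) * β2 x.2.2 a2 *
            (G.r x.1 a1 a2 - c))
        = ∑ a1, ∑ a2, o x * (β1 x.2.1 a1 - β1' x.2.1 a1) * β2 x.2.2 a2 * c := by
      simp only [← Finset.sum_sub_distrib]
      exact Finset.sum_congr rfl fun a1 _ => Finset.sum_congr rfl fun a2 _ => by ring
    rw [hzero] at expand
    linarith
  have hsplit : Rew G t o β1 β2 - Rew G t o β1' β2
      = ∑ x : G.S × Hist G.A1 G.Z1 t × Hist G.A2 G.Z2 t, ∑ a1, ∑ a2,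
          o x * (β1 x.2.1 a1 - β1' x.2.1 a1) * β2 x.2.2 a2 * (G.r x.1 a1 a2 - c) := by
    unfold Rew
    rw [← Finset.sum_sub_distrib]
    exact Finset.sum_congr rfl fun x _ => key x
  rw [hsplit]
  have hlr : (0:ℝ) ≤ (rmax G - rmin G) / 2 := by
    have x0 := Classical.arbitrary (G.S × G.A1 × G.A2)
    have hax : G.r x0.1 x0.2.1 x0.2.2 ≤ rmax G := by
      unfold rmax
      exact Finset.le_sup' (fun x : G.S × G.A1 × G.A2 => G.r x.1 x.2.1 x.2.2)
        (Finset.mem_univ x0)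
    have hin : rmin G ≤ G.r x0.1 x0.2.1 x0.2.2 := by
      unfold rmin
      exact Finset.inf'_le (fun x : G.S × G.A1 × G.A2 => G.r x.1 x.2.1 x.2.2)
        (Finset.mem_univ x0)
    linarith
  calc |∑ x : G.S × Hist G.A1 G.Z1 t × Hist G.A2 G.Z2 t, ∑ a1, ∑ a2,
        o x * (β1 x.2.1 a1 - β1' x.2.1 a1) * β2 x.2.2 a2 * (G.r x.1 a1 a2 - c)|
      ≤ ∑ x : G.S × Hist G.A1 G.Z1 t × Hist G.A2 G.Z2 t, ∑ a1, ∑ a2,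
          |o x * (β1 x.2.1 a1 - β1' x.2.1 a1) * β2 x.2.2 a2 * (G.r x.1 a1 a2 - c)| := by
        refine (Finset.abs_sum_le_sum_abs _ _).trans (Finset.sum_le_sum fun x _ => ?_)
        refine (Finset.abs_sum_le_sum_abs _ _).trans (Finset.sum_le_sum fun a1 _ => ?_)
        exact Finset.abs_sum_le_sum_abs _ _
    _ ≤ ∑ x : G.S × Hist G.A1 G.Z1 t × Hist G.A2 G.Z2 t, ∑ a1, ∑ a2,
          o x * |β1 x.2.1 a1 - β1' x.2.1 a1| * β2 x.2.2 a2 * ((rmax G - rmin G) / 2) := by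
        refine Finset.sum_le_sum fun x _ => Finset.sum_le_sum fun a1 _ =>
          Finset.sum_le_sum fun a2 _ => ?_
        rw [abs_mul, abs_mul, abs_mul, abs_of_nonneg (ho.1 x), abs_of_nonneg (h2.1 _ _)]
        exact mul_le_mul_of_nonneg_left (hr _ _ _)
          (mul_nonneg (mul_nonneg (ho.1 x) (abs_nonneg _)) (h2.1 _ _))
    _ = ∑ x : G.S × Hist G.A1 G.Z1 t × Hist G.A2 G.Z2 t,
          o x * ((rmax G - rmin G) / 2) * ∑ a1, |β1 x.2.1 a1 - β1' x.2.1 a1| := by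
        refine Finset.sum_congr rfl fun x _ => ?_
        have inner2 : ∀ a1, ∑ a2, o x * |β1 x.2.1 a1 - β1' x.2.1 a1| * β2 x.2.2 a2 *
            ((rmax G - rmin G) / 2)
            = o x * ((rmax G - rmin G) / 2) * |β1 x.2.1 a1 - β1' x.2.1 a1| := by
          intro a1
          calc ∑ a2, o x * |β1 x.2.1 a1 - β1' x.2.1 a1| * β2 x.2.2 a2 *
                ((rmax G - rmin G) / 2)
              = (o x * ((rmax G - rmin G) / 2) * |β1 x.2.1 a1 - β1' x.2.1 a1|) *
                  ∑ a2, β2 x.2.2 a2 := by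
                rw [Finset.mul_sum]
                exact Finset.sum_congr rfl fun a2 _ => by ring
            _ = o x * ((rmax G - rmin G) / 2) * |β1 x.2.1 a1 - β1' x.2.1 a1| := by
                rw [h2.2, mul_one]
        simp only [inner2]
        rw [← Finset.mul_sum]
    _ ≤ ∑ x : G.S × Hist G.A1 G.Z1 t × Hist G.A2 G.Z2 t,
          o x * ((rmax G - rmin G) / 2) * drDist t β1 β1' := by
        refine Finset.sum_le_sum fun x _ => ?_
        exact mul_le_mul_of_nonneg_left (sum_abs_le_drDist t β1 β1' x.2.1)
          (mul_nonneg (ho.1 x) hlr)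
    _ = (rmax G - rmin G) / 2 * drDist t β1 β1' := by
        rw [← Finset.sum_mul, ← Finset.sum_mul, ho.2]
        ring

lemma rewDiff2 (G : POSG) (t : ℕ) (o : OccVec G t) (ho : IsOcc G t o)
    (β1 : DRVec G.A1 G.Z1 t) (β2 β2' : DRVec G.A2 G.Z2 t)
    (h1 : IsDR t β1) (h2 : IsDR t β2) (h2' : IsDR t β2') :
    |Rew G t o β1 β2 - Rew G t o β1 β2'|
      ≤ (rmax G - rmin G) / 2 * drDist t β2 β2' := by
  set c : ℝ := (rmax G + rmin G) / 2 with hc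
  have hr : ∀ s a1 a2, |G.r s a1 a2 - c| ≤ (rmax G - rmin G) / 2 := by
    intro s a1 a2
    have hax : G.r s a1 a2 ≤ rmax G := by
      unfold rmax
      exact Finset.le_sup' (fun x : G.S × G.A1 × G.A2 => G.r x.1 x.2.1 x.2.2)
        (Finset.mem_univ (s, a1, a2))
    have hin : rmin G ≤ G.r s a1 a2 := by
      unfold rmin
      exact Finset.inf'_le (fun x : G.S × G.A1 × G.A2 => G.r x.1 x.2.1 x.2.2)
        (Finset.mem_univ (s, a1, a2))
    rw [abs_le]
    constructor <;> (rw [hc]; try constructor) <;> linarith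
  have key : ∀ x : G.S × Hist G.A1 G.Z1 t × Hist G.A2 G.Z2 t,
      (∑ a1, ∑ a2, o x * β1 x.2.1 a1 * β2 x.2.2 a2 * G.r x.1 a1 a2)
        - (∑ a1, ∑ a2, o x * β1 x.2.1 a1 * β2' x.2.2 a2 * G.r x.1 a1 a2)
      = ∑ a1, ∑ a2, o x * β1 x.2.1 a1 * (β2 x.2.2 a2 - β2' x.2.2 a2) *
          (G.r x.1 a1 a2 - c) := by
    intro x
    have hzero : ∑ a1, ∑ a2, o x * β1 x.2.1 a1 * (β2 x.2.2 a2 - β2' x.2.2 a2) * c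
        = 0 := by
      refine Finset.sum_eq_zero fun a1 _ => ?_
      calc ∑ a2, o x * β1 x.2.1 a1 * (β2 x.2.2 a2 - β2' x.2.2 a2) * c
          = (o x * β1 x.2.1 a1 * c) * ∑ a2, (β2 x.2.2 a2 - β2' x.2.2 a2) := by
            rw [Finset.mul_sum]
            exact Finset.sum_congr rfl fun a2 _ => by ring
        _ = 0 := by
            rw [Finset.sum_sub_distrib, h2.2, h2'.2, sub_self, mul_zero]
    have expand : (∑ a1, ∑ a2, o x * β1 x.2.1 a1 * β2 x.2.2 a2 * G.r x.1 a1 a2)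
        - (∑ a1, ∑ a2, o x * β1 x.2.1 a1 * β2' x.2.2 a2 * G.r x.1 a1 a2)
        - (∑ a1, ∑ a2, o x * β1 x.2.1 a1 * (β2 x.2.2 a2 - β2' x.2.2 a2) *
            (G.r x.1 a1 a2 - c))
        = ∑ a1, ∑ a2, o x * β1 x.2.1 a1 * (β2 x.2.2 a2 - β2' x.2.2 a2) * c := by
      simp only [← Finset.sum_sub_distrib]
      exact Finset.sum_congr rfl fun a1 _ => Finset.sum_congr rfl fun a2 _ => by ring
    rw [hzero] at expand
    linarith
  have hsplit : Rew G t o β1 β2 - Rew G t o β1 β2'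
      = ∑ x : G.S × Hist G.A1 G.Z1 t × Hist G.A2 G.Z2 t, ∑ a1, ∑ a2,
          o x * β1 x.2.1 a1 * (β2 x.2.2 a2 - β2' x.2.2 a2) * (G.r x.1 a1 a2 - c) := by
    unfold Rew
    rw [← Finset.sum_sub_distrib]
    exact Finset.sum_congr rfl fun x _ => key x
  rw [hsplit]
  have hlr : (0:ℝ) ≤ (rmax G - rmin G) / 2 := by
    have x0 := Classical.arbitrary (G.S × G.A1 × G.A2)
    have hax : G.r x0.1 x0.2.1 x0.2.2 ≤ rmax G := by
      unfold rmax
      exact Finset.le_sup' (fun x : G.S × G.A1 × G.A2 => G.r x.1 x.2.1 x.2.2)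
        (Finset.mem_univ x0)
    have hin : rmin G ≤ G.r x0.1 x0.2.1 x0.2.2 := by
      unfold rmin
      exact Finset.inf'_le (fun x : G.S × G.A1 × G.A2 => G.r x.1 x.2.1 x.2.2)
        (Finset.mem_univ x0)
    linarith
  calc |∑ x : G.S × Hist G.A1 G.Z1 t × Hist G.A2 G.Z2 t, ∑ a1, ∑ a2,
        o x * β1 x.2.1 a1 * (β2 x.2.2 a2 - β2' x.2.2 a2) * (G.r x.1 a1 a2 - c)|
      ≤ ∑ x : G.S × Hist G.A1 G.Z1 t × Hist G.A2 G.Z2 t, ∑ a1, ∑ a2,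
          |o x * β1 x.2.1 a1 * (β2 x.2.2 a2 - β2' x.2.2 a2) * (G.r x.1 a1 a2 - c)| := by
        refine (Finset.abs_sum_le_sum_abs _ _).trans (Finset.sum_le_sum fun x _ => ?_)
        refine (Finset.abs_sum_le_sum_abs _ _).trans (Finset.sum_le_sum fun a1 _ => ?_)
        exact Finset.abs_sum_le_sum_abs _ _
    _ ≤ ∑ x : G.S × Hist G.A1 G.Z1 t × Hist G.A2 G.Z2 t, ∑ a1, ∑ a2,
          o x * β1 x.2.1 a1 * |β2 x.2.2 a2 - β2' x.2.2 a2| * ((rmax G - rmin G) / 2) := by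
        refine Finset.sum_le_sum fun x _ => Finset.sum_le_sum fun a1 _ =>
          Finset.sum_le_sum fun a2 _ => ?_
        rw [abs_mul, abs_mul, abs_mul, abs_of_nonneg (ho.1 x), abs_of_nonneg (h1.1 _ _)]
        exact mul_le_mul_of_nonneg_left (hr _ _ _)
          (mul_nonneg (mul_nonneg (ho.1 x) (h1.1 _ _)) (abs_nonneg _))
    _ = ∑ x : G.S × Hist G.A1 G.Z1 t × Hist G.A2 G.Z2 t,
          o x * ((rmax G - rmin G) / 2) * ∑ a2, |β2 x.2.2 a2 - β2' x.2.2 a2| := by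
        refine Finset.sum_congr rfl fun x _ => ?_
        have inner2 : ∀ a1, ∑ a2, o x * β1 x.2.1 a1 * |β2 x.2.2 a2 - β2' x.2.2 a2| *
            ((rmax G - rmin G) / 2)
            = (o x * ((rmax G - rmin G) / 2) *
                ∑ a2, |β2 x.2.2 a2 - β2' x.2.2 a2|) * β1 x.2.1 a1 := by
          intro a1
          rw [Finset.mul_sum, Finset.sum_mul]
          exact Finset.sum_congr rfl fun a2 _ => by ring
        simp only [inner2]
        rw [← Finset.mul_sum, h1.2, mul_one]
    _ ≤ ∑ x : G.S × Hist G.A1 G.Z1 t × Hist G.A2 G.Z2 t,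
          o x * ((rmax G - rmin G) / 2) * drDist t β2 β2' := by
        refine Finset.sum_le_sum fun x _ => ?_
        exact mul_le_mul_of_nonneg_left (sum_abs_le_drDist t β2 β2' x.2.2)
          (mul_nonneg (ho.1 x) hlr)
    _ = (rmax G - rmin G) / 2 * drDist t β2 β2' := by
        rw [← Finset.sum_mul, ← Finset.sum_mul, ho.2]
        ring

end POSGAux

/-- if `V*_{τ+1}` is λ-Lipschitz on the occupancy simplex (ℓ¹-norm), then for
`λ_r = (max r − min r)/2` the local game `Q*_τ(o_τ, ·, ·)` is `(λ_r + γλ)`-Lipschitz in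
each player's decision rule (the other being fixed), w.r.t. `max_θ Σ_a |·|`. -/
theorem local_game_lipschitz_in_decision_rules (G : POSG) (τ : ℕ) (hτ : τ < G.H)
    (o : OccVec G τ) (ho : IsOcc G τ o) (lam : ℝ)
    (hV : ∀ o1 o2 : OccVec G (τ + 1), IsOcc G (τ + 1) o1 → IsOcc G (τ + 1) o2 →
        |Vstar G (τ + 1) o1 - Vstar G (τ + 1) o2| ≤ lam * ∑ x, |o1 x - o2 x|) :
    (∀ β1 β1' : DRVec G.A1 G.Z1 τ, ∀ β2 : DRVec G.A2 G.Z2 τ,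
        IsDR τ β1 → IsDR τ β1' → IsDR τ β2 →
        |Qstar G τ o β1 β2 - Qstar G τ o β1' β2|
          ≤ ((rmax G - rmin G) / 2 + G.γ * lam) * drDist τ β1 β1') ∧
    (∀ β1 : DRVec G.A1 G.Z1 τ, ∀ β2 β2' : DRVec G.A2 G.Z2 τ,
        IsDR τ β1 → IsDR τ β2 → IsDR τ β2' →
        |Qstar G τ o β1 β2 - Qstar G τ o β1 β2'|
          ≤ ((rmax G - rmin G) / 2 + G.γ * lam) * drDist τ β2 β2') := by
  classical
  rcases subsingleton_or_nontrivial
      (G.S × Hist G.A1 G.Z1 (τ + 1) × Hist G.A2 G.Z2 (τ + 1)) with hsub | hnt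
  · -- degenerate case: a single joint state-history, so actions are unique
    obtain ⟨z1⟩ : Nonempty G.Z1 := inferInstance
    obtain ⟨z2⟩ : Nonempty G.Z2 := inferInstance
    obtain ⟨s0⟩ : Nonempty G.S := inferInstance
    obtain ⟨hh1⟩ : Nonempty (Hist G.A1 G.Z1 (τ + 1)) := inferInstance
    obtain ⟨hh2⟩ : Nonempty (Hist G.A2 G.Z2 (τ + 1)) := inferInstance
    have hA1 : ∀ a a' : G.A1, a = a' := by
      intro a a'
      have h := hsub.allEq (s0, fun _ => (a, z1), hh2) (s0, fun _ => (a', z1), hh2)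
      have h' := congrArg (fun p : G.S × Hist G.A1 G.Z1 (τ + 1) ×
        Hist G.A2 G.Z2 (τ + 1) => (p.2.1 ⟨0, Nat.succ_pos τ⟩).1) h
      simpa using h'
    have hA2 : ∀ a a' : G.A2, a = a' := by
      intro a a'
      have h := hsub.allEq (s0, hh1, fun _ => (a, z2)) (s0, hh1, fun _ => (a', z2))
      have h' := congrArg (fun p : G.S × Hist G.A1 G.Z1 (τ + 1) ×
        Hist G.A2 G.Z2 (τ + 1) => (p.2.2 ⟨0, Nat.succ_pos τ⟩).1) h
      simpa using h'
    haveI sA1 : Subsingleton G.A1 := ⟨hA1⟩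
    haveI sA2 : Subsingleton G.A2 := ⟨hA2⟩
    constructor
    · intro β1 β1' β2 h1 h1' h2
      have hβ : β1 = β1' := by
        funext θ a
        have e1 := h1.2 θ
        have e2 := h1'.2 θ
        rw [Fintype.sum_subsingleton _ a] at e1 e2
        rw [e1, e2]
      rw [hβ, sub_self, abs_zero]
      have hd : drDist τ β1' β1' = 0 := by
        unfold drDist
        simp
      rw [hd, mul_zero]
    · intro β1 β2 β2' h1 h2 h2'
      have hβ : β2 = β2' := by
        funext θ a
        have e1 := h2.2 θ
        have e2 := h2'.2 θ
        rw [Fintype.sum_subsingleton _ a] at e1 e2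
        rw [e1, e2]
      rw [hβ, sub_self, abs_zero]
      have hd : drDist τ β2' β2' = 0 := by
        unfold drDist
        simp
      rw [hd, mul_zero]
  · -- main case
    have hlam : 0 ≤ lam := by
      obtain ⟨x, y, hxy⟩ := exists_pair_ne
        (G.S × Hist G.A1 G.Z1 (τ + 1) × Hist G.A2 G.Z2 (τ + 1))
      set o1 : OccVec G (τ + 1) := fun z => if z = x then 1 else 0 with ho1def
      set o2 : OccVec G (τ + 1) := fun z => if z = y then 1 else 0 with ho2def
      have ho1 : IsOcc G (τ + 1) o1 := by
        constructor
        · intro z; rw [ho1def]; dsimp only; split <;> norm_num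
        · simp [ho1def]
      have ho2 : IsOcc G (τ + 1) o2 := by
        constructor
        · intro z; rw [ho2def]; dsimp only; split <;> norm_num
        · simp [ho2def]
      have hx : |o1 x - o2 x| = 1 := by
        rw [ho1def, ho2def]
        simp [hxy]
      have hsum : (1:ℝ) ≤ ∑ z, |o1 z - o2 z| := by
        rw [← hx]
        exact Finset.single_le_sum (f := fun z => |o1 z - o2 z|)
          (fun z _ => abs_nonneg _) (Finset.mem_univ x)
      have h0 : (0:ℝ) ≤ lam * ∑ z, |o1 z - o2 z| :=
        le_trans (abs_nonneg _) (hV o1 o2 ho1 ho2)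
      by_contra hneg
      push_neg at hneg
      nlinarith
    constructor
    · intro β1 β1' β2 h1 h1' h2
      have hT := POSGAux.isOcc_Tr G τ o ho h1 h2
      have hT' := POSGAux.isOcc_Tr G τ o ho h1' h2
      have hVb := hV _ _ hT hT'
      have hTd := POSGAux.trDiff1 G τ o ho β1 β1' h2
      have hR := POSGAux.rewDiff1 G τ o ho β1 β1' β2 h1 h1' h2
      have key : Qstar G τ o β1 β2 - Qstar G τ o β1' β2
          = (Rew G τ o β1 β2 - Rew G τ o β1' β2)
            + G.γ * (Vstar G (τ + 1) (Tr G τ o β1 β2)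
                - Vstar G (τ + 1) (Tr G τ o β1' β2)) := by
        unfold Qstar; ring
      rw [key]
      calc |(Rew G τ o β1 β2 - Rew G τ o β1' β2)
            + G.γ * (Vstar G (τ + 1) (Tr G τ o β1 β2)
                - Vstar G (τ + 1) (Tr G τ o β1' β2))|
          ≤ |Rew G τ o β1 β2 - Rew G τ o β1' β2|
            + |G.γ * (Vstar G (τ + 1) (Tr G τ o β1 β2)
                - Vstar G (τ + 1) (Tr G τ o β1' β2))| := abs_add_le _ _
        _ = |Rew G τ o β1 β2 - Rew G τ o β1' β2|
            + G.γ * |Vstar G (τ + 1) (Tr G τ o β1 β2)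
                - Vstar G (τ + 1) (Tr G τ o β1' β2)| := by
            rw [abs_mul, abs_of_nonneg G.γ_nonneg]
        _ ≤ (rmax G - rmin G) / 2 * drDist τ β1 β1'
            + G.γ * (lam * drDist τ β1 β1') := by
            refine add_le_add hR (mul_le_mul_of_nonneg_left ?_ G.γ_nonneg)
            exact hVb.trans (mul_le_mul_of_nonneg_left hTd hlam)
        _ = ((rmax G - rmin G) / 2 + G.γ * lam) * drDist τ β1 β1' := by ring
    · intro β1 β2 β2' h1 h2 h2'
      have hT := POSGAux.isOcc_Tr G τ o ho h1 h2
      have hT' := POSGAux.isOcc_Tr G τ o ho h1 h2'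
      have hVb := hV _ _ hT hT'
      have hTd := POSGAux.trDiff2 G τ o ho h1 β2 β2'
      have hR := POSGAux.rewDiff2 G τ o ho β1 β2 β2' h1 h2 h2'
      have key : Qstar G τ o β1 β2 - Qstar G τ o β1 β2'
          = (Rew G τ o β1 β2 - Rew G τ o β1 β2')
            + G.γ * (Vstar G (τ + 1) (Tr G τ o β1 β2)
                - Vstar G (τ + 1) (Tr G τ o β1 β2')) := by
        unfold Qstar; ring
      rw [key]
      calc |(Rew G τ o β1 β2 - Rew G τ o β1 β2')
            + G.γ * (Vstar G (τ + 1) (Tr G τ o β1 β2)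
                - Vstar G (τ + 1) (Tr G τ o β1 β2'))|
          ≤ |Rew G τ o β1 β2 - Rew G τ o β1 β2'|
            + |G.γ * (Vstar G (τ + 1) (Tr G τ o β1 β2)
                - Vstar G (τ + 1) (Tr G τ o β1 β2'))| := abs_add_le _ _
        _ = |Rew G τ o β1 β2 - Rew G τ o β1 β2'|
            + G.γ * |Vstar G (τ + 1) (Tr G τ o β1 β2)
                - Vstar G (τ + 1) (Tr G τ o β1 β2')| := by
            rw [abs_mul, abs_of_nonneg G.γ_nonneg]
        _ ≤ (rmax G - rmin G) / 2 * drDist τ β2 β2'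
            + G.γ * (lam * drDist τ β2 β2') := by
            refine add_le_add hR (mul_le_mul_of_nonneg_left ?_ G.γ_nonneg)
            exact hVb.trans (mul_le_mul_of_nonneg_left hTd hlam)
        _ = ((rmax G - rmin G) / 2 + G.γ * lam) * drDist τ β2 β2' := by ring
end

section
/- Let f : ℝⁿ → ℝ be a linear map and let m, M ∈ ℝ be such that m ≤ f(e_i) ≤ M for every standard basis vector e_i of ℝⁿ. Then for all x, y in the standard probability simplex Δⁿ = { v ∈ ℝⁿ : v_i ≥ 0, Σ_i v_i = 1 }, one has |f(x) − f(y)| ≤ ((M − m)/2) · ‖x − y‖₁; i.e., a linear function bounded between m and M on the simplex is ((M−m)/2)-Lipschitz there with respect to the ℓ¹-norm. -/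
open scoped BigOperators

/-- a linear functional whose values on the standard basis vectors lie in
`[m, M]` is `((M − m)/2)`-Lipschitz on the standard probability simplex w.r.t. the ℓ¹-norm. -/
theorem linear_bounded_lipschitz_on_simplex
    (n : ℕ) (f : (Fin n → ℝ) →ₗ[ℝ] ℝ) (m M : ℝ)
    (hm : ∀ i : Fin n, m ≤ f (Pi.single i 1))
    (hM : ∀ i : Fin n, f (Pi.single i 1) ≤ M) :
    ∀ x y : Fin n → ℝ,
      ((∀ i, 0 ≤ x i) ∧ ∑ i, x i = 1) →
      ((∀ i, 0 ≤ y i) ∧ ∑ i, y i = 1) →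
      |f x - f y| ≤ (M - m) / 2 * ∑ i, |x i - y i| := by
  intro x y hx hy
  set c : ℝ := (M + m) / 2 with hc
  have hsingle : ∀ i : Fin n, (Pi.single i 1 : Fin n → ℝ) = fun j => if i = j then 1 else 0 := by
    intro i; ext j
    by_cases h : i = j <;> simp [Pi.single_apply, h, eq_comm]
  have key : f x - f y = ∑ i, (x i - y i) * (f (Pi.single i 1) - c) := by
    have hx' := f.pi_apply_eq_sum_univ x
    have hy' := f.pi_apply_eq_sum_univ y
    simp only [← hsingle] at hx' hy'
    rw [hx', hy']
    have hsum : ∑ i, (x i - y i) = 0 := by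
      rw [Finset.sum_sub_distrib, hx.2, hy.2, sub_self]
    have h0 : ∑ i, (x i - y i) * c = 0 := by
      rw [← Finset.sum_mul, hsum, zero_mul]
    rw [← sub_zero (_ - _), ← h0, ← Finset.sum_sub_distrib, ← Finset.sum_sub_distrib]
    refine Finset.sum_congr rfl fun i _ => ?_
    simp [smul_eq_mul]; ring
  rw [key]
  calc |∑ i, (x i - y i) * (f (Pi.single i 1) - c)|
      ≤ ∑ i, |(x i - y i) * (f (Pi.single i 1) - c)| := Finset.abs_sum_le_sum_abs _ _
    _ ≤ ∑ i, |x i - y i| * ((M - m) / 2) := by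
        refine Finset.sum_le_sum fun i _ => ?_
        rw [abs_mul]
        refine mul_le_mul_of_nonneg_left ?_ (abs_nonneg _)
        rw [abs_le]
        constructor
        · have := hm i; simp [hc]; linarith
        · have := hM i; simp [hc]; linarith
    _ = (M - m) / 2 * ∑ i, |x i - y i| := by rw [← Finset.sum_mul]; ring
end
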